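/- arXiv:2002.12518 — 4 statements merged into one kernel-verified Lean document; each statement's English description precedes it below -/
import Mathlib

section
/- Let I, d, K, m be positive integers, let X ⊆ {0,1}^I × ℝ^d be a nonempty set of feasible decisions, let g : {0,1}^I × ℝ^d → ℝ, and let Q : {0,1}^I × {1,…,K} → ℝ be a value function. Let a₁,…,a_K ∈ ℝ^m, and let l, u : {0,1}^I → ℝ^m and p̲, p̄ : {0,1}^I → ℝ^K be decision-dependent bounds; for x ∈ {0,1}^I set P₁(x) = {p ∈ ℝ^K : p ≥ 0, p̲(x) ≤ p ≤ p̄(x), and l(x) ≤ Σ_{k=1}^K p_k a_k ≤ u(x)} (all inequalities componentwise). Assume P₁(x) ≠ ∅ for every x in the projection X̂ = {x : ∃ y, (x,y) ∈ X}. Then the optimal value inf over (x,y) ∈ X of [ g(x,y) + sup_{p ∈ P₁(x)} Σ_{k=1}^K p_k Q(x,k) ] equals the optimal value of the minimization problem: inf of g(x,y) − αᵀ l(x) + βᵀ u(x) − γ̲ᵀ p̲(x) + γ̄ᵀ p̄(x) over all (x,y) ∈ X, α, β ∈ ℝ^m with α ≥ 0, β ≥ 0, and γ̲, γ̄ ∈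 ℝ^K with γ̲ ≥ 0, γ̄ ≥ 0, subject to (−α+β)ᵀ a_k − γ̲_k + γ̄_k ≥ Q(x,k) for every k ∈ {1,…,K}. -/
open scoped BigOperators

/-- Type 1 (decision-dependent moment-bound) ambiguity set with finite support:
probabilities `p ∈ ℝ^K` with `p ≥ 0`, `plo ≤ p ≤ phi` componentwise, and
`l ≤ Σ_k p_k a_k ≤ u` componentwise, where `a_k ∈ ℝ^m` are the moment-function
values at the `K` support points. -/
def Type1Set (K m : ℕ) (a : Fin K → Fin m → ℝ) (l u : Fin m → ℝ)
    (plo phi : Fin K → ℝ) : Set (Fin K → ℝ) :=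
  {p | (∀ k, 0 ≤ p k) ∧ (∀ k, plo k ≤ p k ∧ p k ≤ phi k) ∧
       (∀ s, l s ≤ ∑ k, p k * a k s ∧ ∑ k, p k * a k s ≤ u s)}



section DDRAux
open Finset

theorem sum_ext_zero {κ M : Type*} [Fintype κ] [AddCommMonoid M] (t : Finset κ) (f : κ → M)
    (hf : ∀ k ∉ t, f k = 0) : ∑ k, f k = ∑ k : t, f ↑k := by
  rw [Finset.sum_coe_sort]
  exact (Finset.sum_subset (Finset.subset_univ t) (fun x _ hx => hf x hx)).symm

theorem cone_carath {κ : Type*} [Fintype κ] [DecidableEq κ] {E : Type*} [AddCommGroup E]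
    [Module ℝ E] (v : κ → E) (s : Finset κ) :
    ∀ (c : κ → ℝ), (∀ k, 0 ≤ c k) → (∀ k ∉ s, c k = 0) →
    ∃ (t : Finset κ) (c' : κ → ℝ), (∀ k, 0 ≤ c' k) ∧ (∀ k ∉ t, c' k = 0) ∧
      ∑ k, c' k • v k = ∑ k, c k • v k ∧ LinearIndependent ℝ (fun k : t => v (k : κ)) := by
  induction s using Finset.strongInduction with
  | _ s ih =>
    intro c hc hsupp
    by_cases hli : LinearIndependent ℝ (fun k : s => v (k : κ))
    · exact ⟨s, c, hc, hsupp, rfl, hli⟩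
    obtain ⟨g, hgsum, i0, hgi0⟩ := Fintype.not_linearIndependent_iff.mp hli
    classical
    set d : κ → ℝ := fun k => if h : k ∈ s then g ⟨k, h⟩ else 0 with hd
    have hdsupp : ∀ k ∉ s, d k = 0 := fun k hk => dif_neg hk
    have hdsum : ∑ k, d k • v k = 0 := by
      rw [sum_ext_zero s (fun k => d k • v k)
        (fun k hk => by rw [hdsupp k hk, zero_smul])]
      rw [← hgsum]
      apply Finset.sum_congr rfl
      intro k _
      simp [hd, k.2]
    have hdne : d (i0 : κ) ≠ 0 := by simpa [hd, i0.2] using hgi0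
    -- key step, applied to d or -d
    have key : ∀ d : κ → ℝ, (∀ k ∉ s, d k = 0) → ∑ k, d k • v k = 0 → (∃ k, 0 < d k) →
        ∃ (t : Finset κ) (c' : κ → ℝ), (∀ k, 0 ≤ c' k) ∧ (∀ k ∉ t, c' k = 0) ∧
          ∑ k, c' k • v k = ∑ k, c k • v k ∧
          LinearIndependent ℝ (fun k : t => v (k : κ)) := by
      intro d hdsupp hdsum ⟨k1, hk1⟩
      have hk1s : k1 ∈ s := by
        by_contra h; rw [hdsupp k1 h] at hk1; exact lt_irrefl 0 hk1
      set T : Finset κ := s.filter (fun k => 0 < d k) with hT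
      obtain ⟨k0, hk0T, hmin⟩ := T.exists_min_image (fun k => c k / d k)
        ⟨k1, by simp [hT, hk1s, hk1]⟩
      have hdk0 : 0 < d k0 := (Finset.mem_filter.mp hk0T).2
      have hk0s : k0 ∈ s := (Finset.mem_filter.mp hk0T).1
      set t0 : ℝ := c k0 / d k0 with ht0def
      have ht0 : 0 ≤ t0 := div_nonneg (hc k0) hdk0.le
      set c' : κ → ℝ := fun k => c k - t0 * d k with hc'
      have hc'0 : ∀ k, 0 ≤ c' k := by
        intro k
        rcases le_or_gt (d k) 0 with h | h
        · have : t0 * d k ≤ 0 := mul_nonpos_of_nonneg_of_nonpos ht0 h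
          simp only [hc']; linarith [hc k]
        · have hks : k ∈ s := by
            by_contra hk; rw [hdsupp k hk] at h; exact lt_irrefl 0 h
          have := hmin k (by simp [hT, hks, h])
          rw [le_div_iff₀ h] at this
          simp only [hc']; linarith
      have hc'supp : ∀ k ∉ s.erase k0, c' k = 0 := by
        intro k hk
        rw [Finset.mem_erase] at hk
        push_neg at hk
        by_cases hks : k ∈ s
        · have hkk0 : k = k0 := by by_contra h; exact hk h hks
          subst hkk0
          simp only [hc', ht0def]
          field_simp
          ring
        · simp only [hc', hsupp k hks, hdsupp k hks, mul_zero, sub_zero]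
      have hsum : ∑ k, c' k • v k = ∑ k, c k • v k := by
        simp only [hc', sub_smul, Finset.sum_sub_distrib, mul_smul]
        rw [← Finset.smul_sum, hdsum, smul_zero, sub_zero]
      obtain ⟨t, c'', h1, h2, h3, h4⟩ := ih (s.erase k0) (Finset.erase_ssubset hk0s) c' hc'0 hc'supp
      exact ⟨t, c'', h1, h2, h3.trans hsum, h4⟩
    rcases hdne.lt_or_gt with h | h
    · refine key (fun k => -d k) (fun k hk => by rw [hdsupp k hk, neg_zero]) ?_
        ⟨i0, by simpa using h⟩
      simp only [neg_smul, Finset.sum_neg_distrib, hdsum, neg_zero]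
    · exact key d hdsupp hdsum ⟨i0, h⟩

theorem isClosed_cone {κ : Type*} [Fintype κ] [DecidableEq κ] {E : Type*}
    [NormedAddCommGroup E] [NormedSpace ℝ E]
    (v : κ → E) : IsClosed {x : E | ∃ c : κ → ℝ, (∀ k, 0 ≤ c k) ∧ x = ∑ k, c k • v k} := by
  classical
  let L : (t : Finset κ) → ((↥t → ℝ) →ₗ[ℝ] E) := fun t =>
    { toFun := fun c => ∑ k : t, c k • v (k : κ)
      map_add' := by intro x y; simp only [Pi.add_apply, add_smul, Finset.sum_add_distrib]
      map_smul' := by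
        intro r x
        simp only [Pi.smul_apply, smul_eq_mul, RingHom.id_apply, ← smul_smul, Finset.smul_sum] }
  let D : Finset κ → Set E := fun t =>
    if LinearIndependent ℝ (fun k : t => v (k : κ)) then
      (L t) '' {c | ∀ k, 0 ≤ c k} else ∅
  have hDclosed : ∀ t, IsClosed (D t) := by
    intro t
    simp only [D]
    split_ifs with hli
    · have hker : LinearMap.ker (L t) = ⊥ := by
        rw [LinearMap.ker_eq_bot']
        intro c hc
        exact funext (Fintype.linearIndependent_iff.mp hli c hc)
      have hemb := (L t).isClosedEmbedding_of_injective hker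
      apply hemb.isClosedMap
      have : {c : ↥t → ℝ | ∀ k, 0 ≤ c k} = ⋂ k, {c : ↥t → ℝ | 0 ≤ c k} := by
        ext c; simp [Set.mem_iInter]
      rw [this]
      exact isClosed_iInter fun k => isClosed_le continuous_const (continuous_apply k)
    · exact isClosed_empty
  have hunion : {x : E | ∃ c : κ → ℝ, (∀ k, 0 ≤ c k) ∧ x = ∑ k, c k • v k} = ⋃ t, D t := by
    ext x
    constructor
    · rintro ⟨c, hc, rfl⟩
      obtain ⟨t, c', h1, h2, h3, h4⟩ := cone_carath v Finset.univ c hc (by simp)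
      refine Set.mem_iUnion.mpr ⟨t, ?_⟩
      simp only [D, if_pos h4]
      refine ⟨fun k => c' (k : κ), fun k => h1 _, ?_⟩
      show ∑ k : t, c' (k : κ) • v (k : κ) = _
      rw [← sum_ext_zero t (fun k => c' k • v k) (fun k hk => by
        rw [h2 k hk, zero_smul]), h3]
    · intro hx
      obtain ⟨t, hxt⟩ := Set.mem_iUnion.mp hx
      simp only [D] at hxt
      split_ifs at hxt with hli
      · obtain ⟨c, hc, rfl⟩ := hxt
        refine ⟨fun k => if h : k ∈ t then c ⟨k, h⟩ else 0, ?_, ?_⟩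
        · intro k; dsimp only; split_ifs with h; exacts [hc _, le_refl 0]
        · show (L t) c = _
          rw [sum_ext_zero t (fun k => (if h : k ∈ t then c ⟨k, h⟩ else 0) • v k)
            (fun k hk => by rw [dif_neg hk, zero_smul])]
          show _ = ∑ k : t, _
          apply Finset.sum_congr rfl
          intro k _
          simp [k.2]
      · exact absurd hxt (Set.notMem_empty x)
  rw [hunion]
  exact isClosed_iUnion_of_finite hDclosed

open scoped InnerProductSpace in
theorem farkas_aux {κ : Type*} [Fintype κ] [DecidableEq κ] {E : Type*}
    [NormedAddCommGroup E] [InnerProductSpace ℝ E] [FiniteDimensional ℝ E]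
    (v : κ → E) (b : E)
    (hb : ¬ ∃ c : κ → ℝ, (∀ k, 0 ≤ c k) ∧ b = ∑ k, c k • v k) :
    ∃ y : E, (∀ k, 0 ≤ ⟪v k, y⟫_ℝ) ∧ ⟪y, b⟫_ℝ < 0 := by
  haveI : CompleteSpace E := FiniteDimensional.complete ℝ E
  let Kc : ConvexCone ℝ E :=
    { carrier := {x : E | ∃ c : κ → ℝ, (∀ k, 0 ≤ c k) ∧ x = ∑ k, c k • v k}
      smul_mem' := by
        rintro t ht x ⟨c, hc, rfl⟩
        exact ⟨fun k => t * c k, fun k => mul_nonneg ht.le (hc k),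
          by rw [Finset.smul_sum]; simp [smul_smul]⟩
      add_mem' := by
        rintro x ⟨c, hc, rfl⟩ y ⟨c', hc', rfl⟩
        exact ⟨fun k => c k + c' k, fun k => add_nonneg (hc k) (hc' k),
          by simp [add_smul, Finset.sum_add_distrib]⟩ }
  have hmem : ∀ k, v k ∈ Kc := by
    intro k
    refine ⟨fun j => if j = k then 1 else 0, fun j => by dsimp only; split_ifs <;> norm_num, ?_⟩
    simp [ite_smul]
  let C : ProperCone ℝ E :=
    { carrier := {x : E | ∃ c : κ → ℝ, (∀ k, 0 ≤ c k) ∧ x = ∑ k, c k • v k}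
      add_mem' := by
        rintro x y ⟨c, hc, rfl⟩ ⟨c', hc', rfl⟩
        exact ⟨fun k => c k + c' k, fun k => add_nonneg (hc k) (hc' k),
          by simp [add_smul, Finset.sum_add_distrib]⟩
      zero_mem' := ⟨fun _ => 0, fun _ => le_refl 0, by simp⟩
      smul_mem' := by
        rintro t x ⟨c, hc, rfl⟩
        exact ⟨fun k => (t : ℝ) * c k, fun k => mul_nonneg t.2 (hc k),
          by change (t : ℝ) • ∑ k, c k • v k = _; rw [Finset.smul_sum]; simp [smul_smul]⟩
      isClosed' := isClosed_cone v }
  obtain ⟨y, hy1, hy2⟩ := C.hyperplane_separation' (x₀ := b) hb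
  exact ⟨y, fun k => hy1 (v k) (hmem k), by rw [real_inner_comm]; exact hy2⟩

theorem farkas_pi {ι κ : Type*} [Fintype ι] [Fintype κ] [DecidableEq κ] [DecidableEq ι]
    (v : κ → ι → ℝ) (b : ι → ℝ)
    (hb : ¬ ∃ c : κ → ℝ, (∀ k, 0 ≤ c k) ∧ b = ∑ k, c k • v k) :
    ∃ y : ι → ℝ, (∀ k, 0 ≤ ∑ i, v k i * y i) ∧ ∑ i, b i * y i < 0 := by
  let e : (ι → ℝ) ≃ₗ[ℝ] EuclideanSpace ℝ ι := (WithLp.linearEquiv 2 ℝ (ι → ℝ)).symm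
  have hinner : ∀ x y : ι → ℝ, (inner ℝ (e x) (e y) : ℝ) = ∑ i, x i * y i := by
    intro x y
    rw [PiLp.inner_apply]
    apply Finset.sum_congr rfl
    intro i _
    simp [e, RCLike.inner_apply, mul_comm]
  have hb' : ¬ ∃ c : κ → ℝ, (∀ k, 0 ≤ c k) ∧ e b = ∑ k, c k • (e (v k)) := by
    rintro ⟨c, hc, hsum⟩
    refine hb ⟨c, hc, ?_⟩
    apply e.injective
    rw [hsum, map_sum]
    simp only [map_smul]
  obtain ⟨y, hy1, hy2⟩ := farkas_aux (fun k => e (v k)) (e b) hb'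
  refine ⟨e.symm y, fun k => ?_, ?_⟩
  · have := hy1 k
    rwa [show y = e (e.symm y) by simp, hinner] at this
  · have := hy2
    rw [real_inner_comm, show y = e (e.symm y) by simp, hinner] at this
    exact this

theorem lp_dual {ι κ : Type*} [Fintype ι] [Fintype κ] [DecidableEq ι] [DecidableEq κ]
    (A : κ → ι → ℝ) (b : ι → ℝ) (c : κ → ℝ)
    (hfeas : ∃ p : κ → ℝ, (∀ k, 0 ≤ p k) ∧ ∀ i, ∑ k, p k * A k i ≤ b i)
    (M : ℝ)
    (hM : ∀ p : κ → ℝ, (∀ k, 0 ≤ p k) → (∀ i, ∑ k, p k * A k i ≤ b i) → ∑ k, p k * c k ≤ M)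
    {ε : ℝ} (hε : 0 < ε) :
    ∃ y : ι → ℝ, (∀ i, 0 ≤ y i) ∧ (∀ k, c k ≤ ∑ i, y i * A k i) ∧ ∑ i, y i * b i ≤ M + ε := by
  classical
  set w : (κ ⊕ Option ι) → (Option ι → ℝ) := fun τ =>
    Sum.elim (fun k => fun j => j.elim (-(c k)) (fun i => A k i))
      (fun j0 => Pi.single j0 1) τ with hw
  set bh : Option ι → ℝ := fun j => j.elim (-(M + ε/2)) b with hbh
  have hbnot : ¬ ∃ q : (κ ⊕ Option ι) → ℝ, (∀ τ, 0 ≤ q τ) ∧ bh = ∑ τ, q τ • w τ := by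
    rintro ⟨q, hq, hsum⟩
    set p : κ → ℝ := fun k => q (Sum.inl k) with hp
    have heval : ∀ j : Option ι, bh j = ∑ τ, q τ * w τ j := by
      intro j
      rw [hsum]
      simp [Finset.sum_apply]
    have hfeas2 : ∀ i, ∑ k, p k * A k i ≤ b i := by
      intro i
      have := heval (some i)
      rw [Fintype.sum_sum_type] at this
      simp only [hw, Sum.elim_inl, Sum.elim_inr, Option.elim_some, Pi.single_apply,
        mul_ite, mul_one, mul_zero] at this
      rw [Finset.sum_ite_eq] at this
      simp only [Finset.mem_univ, if_true] at this
      have hb : (bh (some i) : ℝ) = b i := rfl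
      rw [hb] at this
      have := this
      nlinarith [hq (Sum.inr (some i))]
    have hval : ∑ k, p k * c k = M + ε/2 + q (Sum.inr none) := by
      have := heval none
      rw [Fintype.sum_sum_type] at this
      simp only [hw, Sum.elim_inl, Sum.elim_inr, Option.elim_none, Pi.single_apply,
        mul_ite, mul_one, mul_zero] at this
      rw [Finset.sum_ite_eq] at this
      simp only [Finset.mem_univ, if_true] at this
      have hb : (bh none : ℝ) = -(M + ε/2) := rfl
      rw [hb] at this
      have hsimp : ∑ k, q (Sum.inl k) * -(c k) = -∑ k, p k * c k := by
        rw [← Finset.sum_neg_distrib]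
        exact Finset.sum_congr rfl fun k _ => by rw [hp]; ring
      rw [hsimp] at this
      linarith
    have := hM p (fun k => hq _) hfeas2
    rw [hval] at this
    have := hq (Sum.inr none)
    linarith
  obtain ⟨y', hy1, hy2⟩ := farkas_pi w bh hbnot
  set t : ℝ := y' none with hts
  set yi : ι → ℝ := fun i => y' (some i) with hyi
  have hynn : ∀ j : Option ι, 0 ≤ y' j := by
    intro j
    have := hy1 (Sum.inr j)
    simp only [hw, Sum.elim_inr, Pi.single_apply, ite_mul, one_mul, zero_mul] at this
    rw [Finset.sum_ite_eq'] at this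
    simpa using this
  have hkineq : ∀ k, 0 ≤ -(c k) * t + ∑ i, A k i * yi i := by
    intro k
    have := hy1 (Sum.inl k)
    rw [Fintype.sum_option] at this
    simpa [hw] using this
  have hbineq : -(M + ε/2) * t + ∑ i, b i * yi i < 0 := by
    have := hy2
    rw [Fintype.sum_option] at this
    simpa [hbh] using this
  rcases eq_or_lt_of_le (hynn none) with ht0 | htpos
  · exfalso
    have hteq : t = 0 := by rw [hts, ← ht0]
    rw [hteq] at hbineq
    simp only [mul_zero, zero_add] at hbineq
    obtain ⟨p, hp0, hpfeas⟩ := hfeas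
    have h1 : 0 ≤ ∑ k, p k * ∑ i, A k i * yi i := by
      apply Finset.sum_nonneg
      intro k _
      apply mul_nonneg (hp0 k)
      have := hkineq k
      rw [hteq] at this
      simp only [mul_zero, zero_add] at this
      linarith
    have hswap : ∑ k, p k * ∑ i, A k i * yi i = ∑ i, (∑ k, p k * A k i) * yi i := by
      simp_rw [Finset.mul_sum, Finset.sum_mul]
      rw [Finset.sum_comm]
      exact Finset.sum_congr rfl fun i _ => Finset.sum_congr rfl fun k _ => by ring
    have h2 : ∑ i, (∑ k, p k * A k i) * yi i ≤ ∑ i, b i * yi i := by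
      apply Finset.sum_le_sum
      intro i _
      exact mul_le_mul_of_nonneg_right (hpfeas i) (hynn (some i))
    rw [hswap] at h1
    linarith
  · refine ⟨fun i => yi i / t, fun i => div_nonneg (hynn (some i)) htpos.le, ?_, ?_⟩
    · intro k
      have hS : c k * t ≤ ∑ i, A k i * yi i := by have := hkineq k; linarith
      have hrw : ∑ i, yi i / t * A k i = (∑ i, A k i * yi i) / t := by
        rw [Finset.sum_div]
        exact Finset.sum_congr rfl fun i _ => by field_simp
      rw [hrw, le_div_iff₀ htpos]
      exact hS
    · have hS : ∑ i, b i * yi i ≤ (M + ε/2) * t := by linarith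
      have hrw : ∑ i, yi i / t * b i = (∑ i, b i * yi i) / t := by
        rw [Finset.sum_div]
        exact Finset.sum_congr rfl fun i _ => by field_simp
      rw [hrw]
      rw [div_le_iff₀ htpos]
      nlinarith

theorem sInf_eq_sInf_of (S₁ S₂ : Set ℝ) (h₁ : S₁.Nonempty)
    (H1 : ∀ v ∈ S₂, ∃ w ∈ S₁, w ≤ v)
    (H2 : ∀ w ∈ S₁, ∀ ε : ℝ, 0 < ε → ∃ v ∈ S₂, v ≤ w + ε) :
    sInf S₁ = sInf S₂ := by
  obtain ⟨w₀, hw₀⟩ := h₁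
  obtain ⟨v₀, hv₀, _⟩ := H2 w₀ hw₀ 1 one_pos
  have h₂ : S₂.Nonempty := ⟨v₀, hv₀⟩
  by_cases hbdd : BddBelow S₁
  · have hbdd₂ : BddBelow S₂ := by
      obtain ⟨B, hB⟩ := hbdd
      refine ⟨B, fun v hv => ?_⟩
      obtain ⟨w, hw, hwv⟩ := H1 v hv
      exact le_trans (hB hw) hwv
    apply le_antisymm
    · apply le_csInf h₂
      intro v hv
      obtain ⟨w, hw, hwv⟩ := H1 v hv
      exact le_trans (csInf_le hbdd hw) hwv
    · apply le_csInf ⟨w₀, hw₀⟩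
      intro w hw
      apply le_of_forall_pos_le_add
      intro ε hε
      obtain ⟨v, hv, hvw⟩ := H2 w hw ε hε
      exact le_trans (csInf_le hbdd₂ hv) hvw
  · have hbdd₂ : ¬ BddBelow S₂ := by
      rintro ⟨B, hB⟩
      apply hbdd
      refine ⟨B - 1, fun w hw => ?_⟩
      obtain ⟨v, hv, hvw⟩ := H2 w hw 1 one_pos
      have := hB hv
      linarith
    rw [Real.sInf_of_not_bddBelow hbdd, Real.sInf_of_not_bddBelow hbdd₂]

-- weak duality per-x
theorem weak_aux {K m : ℕ} (a : Fin K → Fin m → ℝ) (lx ux : Fin m → ℝ)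
    (plox phix : Fin K → ℝ) (c : Fin K → ℝ) (p : Fin K → ℝ)
    (hp : p ∈ Type1Set K m a lx ux plox phix)
    (α β : Fin m → ℝ) (gl gu : Fin K → ℝ)
    (hα : ∀ s, 0 ≤ α s) (hβ : ∀ s, 0 ≤ β s) (hgl : ∀ k, 0 ≤ gl k) (hgu : ∀ k, 0 ≤ gu k)
    (hfeasd : ∀ k, c k ≤ (∑ s, (-(α s) + β s) * a k s) - gl k + gu k) :
    ∑ k, p k * c k ≤ -(∑ s, α s * lx s) + (∑ s, β s * ux s)
      - (∑ k, gl k * plox k) + (∑ k, gu k * phix k) := by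
  obtain ⟨hp0, hpbox, hpmom⟩ := hp
  have h1 : ∑ k, p k * c k ≤
      ∑ k, p k * ((∑ s, (-(α s) + β s) * a k s) - gl k + gu k) :=
    Finset.sum_le_sum fun k _ => mul_le_mul_of_nonneg_left (hfeasd k) (hp0 k)
  have h2 : ∑ k, p k * ((∑ s, (-(α s) + β s) * a k s) - gl k + gu k)
      = (∑ s, (-(α s) + β s) * (∑ k, p k * a k s)) - (∑ k, p k * gl k)
        + (∑ k, p k * gu k) := by
    have e1 : ∀ k, p k * ((∑ s, (-(α s) + β s) * a k s) - gl k + gu k)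
        = (∑ s, p k * ((-(α s) + β s) * a k s)) - p k * gl k + p k * gu k := by
      intro k
      rw [← Finset.mul_sum]
      ring
    rw [Finset.sum_congr rfl (fun k _ => e1 k)]
    rw [Finset.sum_add_distrib, Finset.sum_sub_distrib]
    congr 2
    rw [Finset.sum_comm]
    exact Finset.sum_congr rfl fun s _ => by rw [Finset.mul_sum]; exact Finset.sum_congr rfl fun k _ => by ring
  have h3 : ∑ s, (-(α s) + β s) * (∑ k, p k * a k s)
      ≤ ∑ s, (-(α s * lx s) + β s * ux s) := by
    apply Finset.sum_le_sum
    intro s _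
    obtain ⟨hl, hu⟩ := hpmom s
    nlinarith [hα s, hβ s, mul_nonneg (hα s) (sub_nonneg.mpr hl), mul_nonneg (hβ s) (sub_nonneg.mpr hu)]
  have h4 : ∑ k, gl k * plox k ≤ ∑ k, p k * gl k :=
    Finset.sum_le_sum fun k _ => by
      have := (hpbox k).1
      nlinarith [hgl k, mul_le_mul_of_nonneg_left this (hgl k)]
  have h5 : ∑ k, p k * gu k ≤ ∑ k, gu k * phix k :=
    Finset.sum_le_sum fun k _ => by
      have := (hpbox k).2
      nlinarith [hgu k, mul_le_mul_of_nonneg_left this (hgu k)]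
  have h6 : ∑ s, (-(α s * lx s) + β s * ux s) = -(∑ s, α s * lx s) + ∑ s, β s * ux s := by
    rw [Finset.sum_add_distrib, Finset.sum_neg_distrib]
  linarith [h1, h2.le, h3, h4, h5, h6.le]

theorem strong_aux {K m : ℕ} (a : Fin K → Fin m → ℝ) (lx ux : Fin m → ℝ)
    (plox phix : Fin K → ℝ) (c : Fin K → ℝ)
    (hPne : (Type1Set K m a lx ux plox phix).Nonempty)
    {ε : ℝ} (hε : 0 < ε) :
    ∃ α β : Fin m → ℝ, ∃ gl gu : Fin K → ℝ,
      (∀ s, 0 ≤ α s) ∧ (∀ s, 0 ≤ β s) ∧ (∀ k, 0 ≤ gl k) ∧ (∀ k, 0 ≤ gu k) ∧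
      (∀ k, c k ≤ (∑ s, (-(α s) + β s) * a k s) - gl k + gu k) ∧
      -(∑ s, α s * lx s) + (∑ s, β s * ux s) - (∑ k, gl k * plox k) + (∑ k, gu k * phix k)
        ≤ sSup {r : ℝ | ∃ p ∈ Type1Set K m a lx ux plox phix, r = ∑ k, p k * c k} + ε := by
  classical
  set A : Fin K → ((Fin m ⊕ Fin m) ⊕ (Fin K ⊕ Fin K)) → ℝ := fun k =>
    Sum.elim (Sum.elim (fun s => -(a k s)) (fun s => a k s))
      (Sum.elim (fun k' => if k = k' then (-1 : ℝ) else 0)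
        (fun k' => if k = k' then (1 : ℝ) else 0)) with hA
  set bb : ((Fin m ⊕ Fin m) ⊕ (Fin K ⊕ Fin K)) → ℝ :=
    Sum.elim (Sum.elim (fun s => -(lx s)) ux)
      (Sum.elim (fun k' => -(plox k')) phix) with hbb
  have hrow1 : ∀ (p : Fin K → ℝ) s, ∑ k, p k * A k (Sum.inl (Sum.inl s)) = -∑ k, p k * a k s := by
    intro p s
    rw [← Finset.sum_neg_distrib]
    exact Finset.sum_congr rfl fun k _ => by simp [hA]
  have hrow2 : ∀ (p : Fin K → ℝ) s, ∑ k, p k * A k (Sum.inl (Sum.inr s)) = ∑ k, p k * a k s := by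
    intro p s
    exact Finset.sum_congr rfl fun k _ => by simp [hA]
  have hrow3 : ∀ (p : Fin K → ℝ) k', ∑ k, p k * A k (Sum.inr (Sum.inl k')) = -(p k') := by
    intro p k'
    have : ∀ k, p k * A k (Sum.inr (Sum.inl k')) = if k = k' then -(p k) else 0 := by
      intro k; simp only [hA, Sum.elim_inr, Sum.elim_inl]; split_ifs <;> ring
    rw [Finset.sum_congr rfl fun k _ => this k]
    rw [Finset.sum_ite_eq']
    simp
  have hrow4 : ∀ (p : Fin K → ℝ) k', ∑ k, p k * A k (Sum.inr (Sum.inr k')) = p k' := by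
    intro p k'
    have : ∀ k, p k * A k (Sum.inr (Sum.inr k')) = if k = k' then p k else 0 := by
      intro k; simp only [hA, Sum.elim_inr]; split_ifs <;> ring
    rw [Finset.sum_congr rfl fun k _ => this k]
    rw [Finset.sum_ite_eq']
    simp
  have feas_iff : ∀ p : Fin K → ℝ,
      ((∀ k, 0 ≤ p k) ∧ ∀ i, ∑ k, p k * A k i ≤ bb i) ↔
        p ∈ Type1Set K m a lx ux plox phix := by
    intro p
    constructor
    · rintro ⟨hp0, hpf⟩
      refine ⟨hp0, fun k => ⟨?_, ?_⟩, fun s => ⟨?_, ?_⟩⟩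
      · have := hpf (Sum.inr (Sum.inl k)); rw [hrow3] at this
        simp only [hbb, Sum.elim_inr, Sum.elim_inl] at this; linarith
      · have := hpf (Sum.inr (Sum.inr k)); rw [hrow4] at this
        simpa [hbb] using this
      · have := hpf (Sum.inl (Sum.inl s)); rw [hrow1] at this
        simp only [hbb, Sum.elim_inl] at this; linarith
      · have := hpf (Sum.inl (Sum.inr s)); rw [hrow2] at this
        simpa [hbb] using this
    · rintro ⟨hp0, hbox, hmom⟩
      refine ⟨hp0, fun i => ?_⟩
      rcases i with (s | s) | (k' | k')
      · rw [hrow1]; simp only [hbb, Sum.elim_inl]; linarith [(hmom s).1]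
      · rw [hrow2]; simpa [hbb] using (hmom s).2
      · rw [hrow3]; simp only [hbb, Sum.elim_inr, Sum.elim_inl]; linarith [(hbox k').1]
      · rw [hrow4]; simpa [hbb] using (hbox k').2
  set R : Set ℝ := {r : ℝ | ∃ p ∈ Type1Set K m a lx ux plox phix, r = ∑ k, p k * c k} with hR
  have hbddR : BddAbove R := by
    refine ⟨∑ k, phix k * |c k|, ?_⟩
    rintro r ⟨p, hp, rfl⟩
    apply Finset.sum_le_sum
    intro k _
    have h1 : p k * c k ≤ p k * |c k| :=
      mul_le_mul_of_nonneg_left (le_abs_self _) (hp.1 k)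
    have h2 : p k * |c k| ≤ phix k * |c k| :=
      mul_le_mul_of_nonneg_right (hp.2.1 k).2 (abs_nonneg _)
    linarith
  have hM : ∀ p : Fin K → ℝ, (∀ k, 0 ≤ p k) → (∀ i, ∑ k, p k * A k i ≤ bb i) →
      ∑ k, p k * c k ≤ sSup R := by
    intro p hp0 hpf
    exact le_csSup hbddR ⟨p, (feas_iff p).mp ⟨hp0, hpf⟩, rfl⟩
  have hfeas : ∃ p : Fin K → ℝ, (∀ k, 0 ≤ p k) ∧ ∀ i, ∑ k, p k * A k i ≤ bb i := by
    obtain ⟨p, hp⟩ := hPne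
    exact ⟨p, (feas_iff p).mpr hp⟩
  obtain ⟨y, hy0, hyfeas, hyval⟩ := lp_dual A bb c hfeas (sSup R) hM hε
  refine ⟨fun s => y (Sum.inl (Sum.inl s)), fun s => y (Sum.inl (Sum.inr s)),
    fun k => y (Sum.inr (Sum.inl k)), fun k => y (Sum.inr (Sum.inr k)),
    fun s => hy0 _, fun s => hy0 _, fun k => hy0 _, fun k => hy0 _, ?_, ?_⟩
  · intro k
    have := hyfeas k
    rw [Fintype.sum_sum_type, Fintype.sum_sum_type, Fintype.sum_sum_type] at this
    have e3 : ∑ k', y (Sum.inr (Sum.inl k')) * A k (Sum.inr (Sum.inl k'))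
        = -(y (Sum.inr (Sum.inl k))) := by
      have : ∀ k', y (Sum.inr (Sum.inl k')) * A k (Sum.inr (Sum.inl k'))
          = if k' = k then -(y (Sum.inr (Sum.inl k'))) else 0 := by
        intro k'; simp only [hA, Sum.elim_inr, Sum.elim_inl]
        rcases eq_or_ne k k' with h | h
        · subst h; simp
        · simp [h, Ne.symm h]
      rw [Finset.sum_congr rfl fun k' _ => this k', Finset.sum_ite_eq']
      simp
    have e4 : ∑ k', y (Sum.inr (Sum.inr k')) * A k (Sum.inr (Sum.inr k'))
        = y (Sum.inr (Sum.inr k)) := by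
      have : ∀ k', y (Sum.inr (Sum.inr k')) * A k (Sum.inr (Sum.inr k'))
          = if k' = k then y (Sum.inr (Sum.inr k')) else 0 := by
        intro k'; simp only [hA, Sum.elim_inr]
        rcases eq_or_ne k k' with h | h
        · subst h; simp
        · simp [h, Ne.symm h]
      rw [Finset.sum_congr rfl fun k' _ => this k', Finset.sum_ite_eq']
      simp
    have e12 : ∑ s, y (Sum.inl (Sum.inl s)) * A k (Sum.inl (Sum.inl s))
        + ∑ s, y (Sum.inl (Sum.inr s)) * A k (Sum.inl (Sum.inr s))
        = ∑ s, (-(y (Sum.inl (Sum.inl s))) + y (Sum.inl (Sum.inr s))) * a k s := by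
      rw [← Finset.sum_add_distrib]
      exact Finset.sum_congr rfl fun s _ => by simp only [hA, Sum.elim_inl, Sum.elim_inr]; ring
    rw [e3, e4, e12] at this
    linarith
  · have := hyval
    rw [Fintype.sum_sum_type, Fintype.sum_sum_type, Fintype.sum_sum_type] at this
    have e1 : ∑ s, y (Sum.inl (Sum.inl s)) * bb (Sum.inl (Sum.inl s))
        = -∑ s, y (Sum.inl (Sum.inl s)) * lx s := by
      rw [← Finset.sum_neg_distrib]
      exact Finset.sum_congr rfl fun s _ => by simp only [hbb, Sum.elim_inl]; ring
    have e3 : ∑ k, y (Sum.inr (Sum.inl k)) * bb (Sum.inr (Sum.inl k))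
        = -∑ k, y (Sum.inr (Sum.inl k)) * plox k := by
      rw [← Finset.sum_neg_distrib]
      exact Finset.sum_congr rfl fun k _ => by simp only [hbb, Sum.elim_inr, Sum.elim_inl]; ring
    have e2 : ∑ s, y (Sum.inl (Sum.inr s)) * bb (Sum.inl (Sum.inr s))
        = ∑ s, y (Sum.inl (Sum.inr s)) * ux s :=
      Finset.sum_congr rfl fun s _ => by simp [hbb]
    have e4 : ∑ k, y (Sum.inr (Sum.inr k)) * bb (Sum.inr (Sum.inr k))
        = ∑ k, y (Sum.inr (Sum.inr k)) * phix k :=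
      Finset.sum_congr rfl fun k _ => by simp [hbb]
    rw [e1, e2, e3, e4] at this
    linarith

end DDRAux

theorem stmt0 (I d K m : ℕ) (hI : 0 < I) (hd : 0 < d) (hK : 0 < K) (hm : 0 < m)
    (X : Set ((Fin I → ℝ) × (Fin d → ℝ))) (hXne : X.Nonempty)
    (hXbin : ∀ z ∈ X, ∀ i, z.1 i = 0 ∨ z.1 i = 1)
    (g : (Fin I → ℝ) × (Fin d → ℝ) → ℝ)
    (Q : (Fin I → ℝ) → Fin K → ℝ)
    (a : Fin K → Fin m → ℝ)
    (l u : (Fin I → ℝ) → Fin m → ℝ)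
    (plo phi : (Fin I → ℝ) → Fin K → ℝ)
    (hne : ∀ x : Fin I → ℝ, (∃ y, (x, y) ∈ X) →
      (Type1Set K m a (l x) (u x) (plo x) (phi x)).Nonempty) :
    sInf {v : ℝ | ∃ z ∈ X,
        v = g z + sSup {r : ℝ | ∃ p ∈ Type1Set K m a (l z.1) (u z.1) (plo z.1) (phi z.1),
          r = ∑ k, p k * Q z.1 k}} =
    sInf {v : ℝ | ∃ z ∈ X, ∃ α β : Fin m → ℝ, ∃ gl gu : Fin K → ℝ,
        (∀ s, 0 ≤ α s) ∧ (∀ s, 0 ≤ β s) ∧ (∀ k, 0 ≤ gl k) ∧ (∀ k, 0 ≤ gu k) ∧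
        (∀ k, Q z.1 k ≤ (∑ s, (-(α s) + β s) * a k s) - gl k + gu k) ∧
        v = g z - (∑ s, α s * l z.1 s) + (∑ s, β s * u z.1 s)
            - (∑ k, gl k * plo z.1 k) + (∑ k, gu k * phi z.1 k)} := by
  classical
  apply sInf_eq_sInf_of
  · obtain ⟨z, hz⟩ := hXne
    exact ⟨_, ⟨z, hz, rfl⟩⟩
  · rintro v ⟨z, hz, α, β, gl, gu, hα, hβ, hgl, hgu, hfeasd, rfl⟩
    refine ⟨_, ⟨z, hz, rfl⟩, ?_⟩
    have hPne := hne z.1 ⟨z.2, by rwa [Prod.mk.eta]⟩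
    obtain ⟨p0, hp0⟩ := hPne
    have hsup : sSup {r : ℝ | ∃ p ∈ Type1Set K m a (l z.1) (u z.1) (plo z.1) (phi z.1),
          r = ∑ k, p k * Q z.1 k}
        ≤ -(∑ s, α s * l z.1 s) + (∑ s, β s * u z.1 s)
          - (∑ k, gl k * plo z.1 k) + (∑ k, gu k * phi z.1 k) := by
      refine csSup_le ?_ ?_
      · exact ⟨∑ k, p0 k * Q z.1 k, ⟨p0, hp0, rfl⟩⟩
      rintro r ⟨p, hp, rfl⟩
      exact weak_aux a (l z.1) (u z.1) (plo z.1) (phi z.1) (Q z.1) p hp α β gl gu hα hβ hgl hgu hfeasd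
    linarith
  · rintro w ⟨z, hz, rfl⟩ ε hε
    have hPne := hne z.1 ⟨z.2, by rwa [Prod.mk.eta]⟩
    obtain ⟨α, β, gl, gu, hα, hβ, hgl, hgu, hfeasd, hval⟩ :=
      strong_aux a (l z.1) (u z.1) (plo z.1) (phi z.1) (Q z.1) hPne hε
    exact ⟨_, ⟨z, hz, α, β, gl, gu, hα, hβ, hgl, hgu, hfeasd, rfl⟩, by linarith⟩
end

section
/- Let I, d, K, J be positive integers, let X ⊆ {0,1}^I × ℝ^d be nonempty, let g : {0,1}^I × ℝ^d → ℝ, and let Q : {0,1}^I × {1,…,K} → ℝ. Let ξ¹,…,ξ^K ∈ ℝ^J and let μ : {0,1}^I → ℝ^J, S : {0,1}^I → ℝ^{J×J} be decision-dependent mean and covariance functions; for x ∈ {0,1}^I set P₂(x) = {p ∈ ℝ^K : p ≥ 0, Σ_k p_k = 1, Σ_k p_k ξᵏ = μ(x), and Σ_k p_k (ξᵏ − μ(x))(ξᵏ − μ(x))ᵀ = S(x)}. Assume P₂(x) ≠ ∅ for every x in the projection X̂ = {x : ∃ y, (x,y) ∈ X}. Then inf over (x,y) ∈ X of [ g(x,y)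 + sup_{p ∈ P₂(x)} Σ_{k=1}^K p_k Q(x,k) ] equals inf of g(x,y) + s + uᵀ μ(x) + S(x) • Y over all (x,y) ∈ X, s ∈ ℝ, u ∈ ℝ^J, Y ∈ ℝ^{J×J}, subject to s + uᵀ ξᵏ + ((ξᵏ − μ(x))(ξᵏ − μ(x))ᵀ) • Y ≥ Q(x,k) for every k ∈ {1,…,K}. -/
open scoped BigOperators

/-- Frobenius inner product `A • B = trace(Aᵀ B) = Σᵢⱼ Aᵢⱼ Bᵢⱼ`. -/
def frob {n : Type*} [Fintype n] (A B : Matrix n n ℝ) : ℝ := ∑ i, ∑ j, A i j * B i j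

/-- Type 2 (exact moment-matching) ambiguity set with finite support
`ξ¹,…,ξ^K ∈ ℝ^J`, mean `μ ∈ ℝ^J` and covariance matrix `S ∈ ℝ^{J×J}`. -/
def Type2Set (K J : ℕ) (ξ : Fin K → Fin J → ℝ) (μ : Fin J → ℝ)
    (S : Matrix (Fin J) (Fin J) ℝ) : Set (Fin K → ℝ) :=
  {p | (∀ k, 0 ≤ p k) ∧ (∑ k, p k) = 1 ∧ (∀ j, ∑ k, p k * ξ k j = μ j) ∧
       ∀ i j, (∑ k, p k * ((ξ k i - μ i) * (ξ k j - μ j))) = S i j}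

noncomputable section

variable {K J : ℕ}

lemma lin_rep {ι : Type*} [Fintype ι] [DecidableEq ι] (h : (ι → ℝ) →ₗ[ℝ] ℝ) (v : ι → ℝ) :
    h v = ∑ i, v i * h (Pi.single i (1:ℝ) : ι → ℝ) := by
  conv_lhs => rw [← Finset.univ_sum_single v, map_sum]
  refine Finset.sum_congr rfl fun i _ => ?_
  have : (Pi.single i (v i) : ι → ℝ) = v i • (Pi.single i (1:ℝ) : ι → ℝ) := by
    ext j; by_cases hij : j = i <;> simp [Pi.single_apply, hij]
  rw [this, map_smul, smul_eq_mul]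

lemma lin_rep2 {ι κ : Type*} [Fintype ι] [Fintype κ] [DecidableEq ι] [DecidableEq κ]
    (h : (ι → κ → ℝ) →ₗ[ℝ] ℝ) (M : ι → κ → ℝ) :
    h M = ∑ i, ∑ j, M i j * h (Pi.single i (Pi.single j (1:ℝ)) : ι → κ → ℝ) := by
  conv_lhs => rw [← Finset.univ_sum_single M, map_sum]
  refine Finset.sum_congr rfl fun i _ => ?_
  have hMi : (Pi.single i (M i) : ι → κ → ℝ)
      = ∑ j, M i j • (Pi.single i (Pi.single j (1:ℝ)) : ι → κ → ℝ) := by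
    ext a b
    by_cases ha : a = i
    · subst ha
      simp [Pi.single_apply, Finset.sum_apply, Finset.sum_ite_eq, smul_eq_mul]
    · simp [Pi.single_apply, Finset.sum_apply, ha, smul_eq_mul]
  rw [hMi, map_sum]
  refine Finset.sum_congr rfl fun j _ => ?_
  rw [map_smul, smul_eq_mul]

lemma cont_sum (a : Fin K → ℝ) : Continuous fun p : Fin K → ℝ => ∑ k, p k * a k :=
  continuous_finset_sum _ fun k _ => (continuous_apply k).mul continuous_const

lemma t2_compact (ξ : Fin K → Fin J → ℝ) (μ0 : Fin J → ℝ) (S0 : Matrix (Fin J) (Fin J) ℝ) :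
    IsCompact (Type2Set K J ξ μ0 S0) := by
  refine IsCompact.of_isClosed_subset (isCompact_stdSimplex ℝ (Fin K)) ?_ ?_
  · have : Type2Set K J ξ μ0 S0 =
        (⋂ k, {p : Fin K → ℝ | 0 ≤ p k}) ∩ ({p | ∑ k, p k = 1} ∩
        ((⋂ j, {p | ∑ k, p k * ξ k j = μ0 j}) ∩
         ⋂ i, ⋂ j, {p | ∑ k, p k * ((ξ k i - μ0 i) * (ξ k j - μ0 j)) = S0 i j})) := by
      ext p
      simp only [Type2Set, Set.mem_setOf_eq, Set.mem_inter_iff, Set.mem_iInter]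
    rw [this]
    refine IsClosed.inter (isClosed_iInter fun k => ?_) (IsClosed.inter ?_
      (IsClosed.inter (isClosed_iInter fun j => ?_)
        (isClosed_iInter fun i => isClosed_iInter fun j => ?_)))
    · exact isClosed_le continuous_const (continuous_apply k)
    · exact isClosed_eq (continuous_finset_sum _ fun k _ => continuous_apply k) continuous_const
    · exact isClosed_eq (cont_sum _) continuous_const
    · exact isClosed_eq (cont_sum _) continuous_const
  · intro p hp; exact ⟨hp.1, hp.2.1⟩

lemma t2_greatest (c : Fin K → ℝ) (ξ : Fin K → Fin J → ℝ) (μ0 : Fin J → ℝ)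
    (S0 : Matrix (Fin J) (Fin J) ℝ) (hne : (Type2Set K J ξ μ0 S0).Nonempty) :
    IsGreatest {r : ℝ | ∃ p ∈ Type2Set K J ξ μ0 S0, r = ∑ k, p k * c k}
      (sSup {r : ℝ | ∃ p ∈ Type2Set K J ξ μ0 S0, r = ∑ k, p k * c k}) := by
  have himg : {r : ℝ | ∃ p ∈ Type2Set K J ξ μ0 S0, r = ∑ k, p k * c k}
      = (fun p : Fin K → ℝ => ∑ k, p k * c k) '' Type2Set K J ξ μ0 S0 := by
    ext r; simp [eq_comm, Set.mem_image]
  have hcomp : IsCompact ((fun p : Fin K → ℝ => ∑ k, p k * c k) '' Type2Set K J ξ μ0 S0) :=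
    (t2_compact ξ μ0 S0).image (cont_sum c)
  obtain ⟨x, hx⟩ := hcomp.exists_isGreatest (hne.image _)
  rw [himg]
  rwa [hx.csSup_eq]

def Tmap (c : Fin K → ℝ) (ξ : Fin K → Fin J → ℝ) (μ0 : Fin J → ℝ) :
    (Fin K → ℝ) →ₗ[ℝ] (Fin J → ℝ) × ((Fin J → Fin J → ℝ) × ℝ) where
  toFun p := (fun j => ∑ k, p k * ξ k j,
    (fun i j => ∑ k, p k * ((ξ k i - μ0 i) * (ξ k j - μ0 j)), ∑ k, p k * c k))
  map_add' p q := by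
    refine Prod.ext ?_ (Prod.ext ?_ ?_) <;>
      simp only [Prod.fst_add, Prod.snd_add] <;>
      try funext
    all_goals simp [add_mul, Finset.sum_add_distrib]
  map_smul' r p := by
    refine Prod.ext ?_ (Prod.ext ?_ ?_) <;>
      simp only [Prod.smul_fst, Prod.smul_snd, RingHom.id_apply] <;>
      try funext
    all_goals simp [Finset.mul_sum, mul_assoc, smul_eq_mul]

lemma Tmap_single (c : Fin K → ℝ) (ξ : Fin K → Fin J → ℝ) (μ0 : Fin J → ℝ) (k : Fin K) :
    Tmap c ξ μ0 (Pi.single k 1) = (fun j => ξ k j,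
      (fun i j => (ξ k i - μ0 i) * (ξ k j - μ0 j), c k)) := by
  refine Prod.ext ?_ (Prod.ext ?_ ?_) <;> simp [Tmap, Pi.single_apply, ite_mul]

lemma single_mem_simplex (k : Fin K) : (Pi.single k 1 : Fin K → ℝ) ∈ stdSimplex ℝ (Fin K) := by
  constructor
  · intro x; by_cases h : x = k <;> simp [Pi.single_apply, h]
  · simp [Pi.single_apply]

lemma strong_dual (c : Fin K → ℝ) (ξ : Fin K → Fin J → ℝ) (μ0 : Fin J → ℝ)
    (S0 : Matrix (Fin J) (Fin J) ℝ) (hne : (Type2Set K J ξ μ0 S0).Nonempty)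
    {ε : ℝ} (hε : 0 < ε) :
    ∃ (s : ℝ) (u : Fin J → ℝ) (Y : Matrix (Fin J) (Fin J) ℝ),
      (∀ k, c k ≤ s + (∑ j, u j * ξ k j) +
        frob (Matrix.vecMulVec (fun j => ξ k j - μ0 j) (fun j => ξ k j - μ0 j)) Y) ∧
      s + (∑ j, u j * μ0 j) + frob S0 Y =
        sSup {r : ℝ | ∃ p ∈ Type2Set K J ξ μ0 S0, r = ∑ k, p k * c k} + ε := by
  set R := {r : ℝ | ∃ p ∈ Type2Set K J ξ μ0 S0, r = ∑ k, p k * c k} with hR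
  set vs := sSup R with hvs
  have hg : IsGreatest R vs := t2_greatest c ξ μ0 S0 hne
  set N : Fin J → Fin J → ℝ := fun i j => S0 i j with hN
  set C : Set ((Fin J → ℝ) × ((Fin J → Fin J → ℝ) × ℝ)) :=
    (Tmap c ξ μ0) '' stdSimplex ℝ (Fin K) with hC
  have hCconv : Convex ℝ C := (convex_stdSimplex ℝ (Fin K)).linear_image _
  have hCcl : IsClosed C :=
    ((isCompact_stdSimplex ℝ (Fin K)).image
      (Tmap c ξ μ0).continuous_of_finiteDimensional).isClosed
  have hx₀ : (μ0, (N, vs + ε)) ∉ C := by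
    rintro ⟨p, hp, hTp⟩
    have h1 := congrArg Prod.fst hTp
    have h2 := congrArg (fun z => z.2.1) hTp
    have h3 := congrArg (fun z => z.2.2) hTp
    simp only [Tmap, LinearMap.coe_mk, AddHom.coe_mk] at h1 h2 h3
    have hpT2 : p ∈ Type2Set K J ξ μ0 S0 :=
      ⟨hp.1, hp.2, fun j => congrFun h1 j, fun i j => congrFun (congrFun h2 i) j⟩
    have : vs + ε ∈ R := ⟨p, hpT2, h3.symm⟩
    have := hg.2 this
    linarith
  obtain ⟨f, u0, hfu, hux⟩ := geometric_hahn_banach_closed_point hCconv hCcl hx₀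
  -- maximizer
  obtain ⟨ps, hps, hval⟩ := hg.1
  have hpsC : Tmap c ξ μ0 ps ∈ C := ⟨ps, ⟨hps.1, hps.2.1⟩, rfl⟩
  have hTps : Tmap c ξ μ0 ps = (μ0, (N, vs)) := by
    refine Prod.ext ?_ (Prod.ext ?_ ?_)
    · funext j; exact hps.2.2.1 j
    · funext i j; exact hps.2.2.2 i j
    · exact hval.symm
  set α := f (0, (0, 1)) with hαdef
  have hsplit : ((μ0, (N, vs + ε)) : (Fin J → ℝ) × ((Fin J → Fin J → ℝ) × ℝ))
      = (μ0, (N, vs)) + ε • (0, (0, 1)) := by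
    refine Prod.ext ?_ (Prod.ext ?_ ?_) <;> simp
  have hα : 0 < α := by
    have h1 : f (Tmap c ξ μ0 ps) < u0 := hfu _ hpsC
    have h2 : u0 < f (μ0, (N, vs + ε)) := hux
    rw [hsplit, map_add, map_smul, smul_eq_mul] at h2
    rw [hTps] at h1
    nlinarith
  -- expansion of f in coordinates
  have hexp : ∀ (v : Fin J → ℝ) (M : Fin J → Fin J → ℝ) (t : ℝ),
      f (v, (M, t)) = (∑ j, v j * f ((Pi.single j (1:ℝ) : Fin J → ℝ), 0))
        + (∑ i, ∑ j, M i j * f (0, ((Pi.single i (Pi.single j (1:ℝ)) : Fin J → Fin J → ℝ), 0)))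
        + t * α := by
    intro v M t
    have hdecomp : ((v, (M, t)) : (Fin J → ℝ) × ((Fin J → Fin J → ℝ) × ℝ))
        = (v, 0) + ((0, (M, 0)) + (0, (0, t))) := by
      refine Prod.ext ?_ (Prod.ext ?_ ?_) <;> simp
    rw [hdecomp, map_add, map_add]
    have e1 : f (v, 0) = ∑ j, v j * f ((Pi.single j (1:ℝ) : Fin J → ℝ), 0) := by
      have := lin_rep (f.toLinearMap.comp
        (LinearMap.inl ℝ (Fin J → ℝ) ((Fin J → Fin J → ℝ) × ℝ))) v
      simpa using this
    have e2 : f (0, (M, 0)) = ∑ i, ∑ j, M i j *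
        f (0, ((Pi.single i (Pi.single j (1:ℝ)) : Fin J → Fin J → ℝ), 0)) := by
      have := lin_rep2 (f.toLinearMap.comp
        ((LinearMap.inr ℝ (Fin J → ℝ) ((Fin J → Fin J → ℝ) × ℝ)).comp
          (LinearMap.inl ℝ (Fin J → Fin J → ℝ) ℝ))) M
      simpa using this
    have e3 : f (0, (0, t)) = t * α := by
      have : ((0, (0, t)) : (Fin J → ℝ) × ((Fin J → Fin J → ℝ) × ℝ)) = t • (0, (0, 1)) := by
        refine Prod.ext ?_ (Prod.ext ?_ ?_) <;> simp
      rw [this, map_smul, smul_eq_mul, hαdef]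
    rw [e1, e2, e3]; ring
  -- dual variables
  set u : Fin J → ℝ := fun j => -(f ((Pi.single j (1:ℝ) : Fin J → ℝ), 0)) / α with hu
  set Y : Matrix (Fin J) (Fin J) ℝ :=
    Matrix.of (fun i j => -(f (0, ((Pi.single i (Pi.single j (1:ℝ)) : Fin J → Fin J → ℝ), 0))) / α)
    with hY
  have hwu : ∀ j, f ((Pi.single j (1:ℝ) : Fin J → ℝ), 0) = α * -(u j) := by
    intro j; rw [hu]; field_simp
  have hwY : ∀ i j, f (0, ((Pi.single i (Pi.single j (1:ℝ)) : Fin J → Fin J → ℝ), 0))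
      = α * -(Y i j) := by
    intro i j; rw [hY]; simp only [Matrix.of_apply]; field_simp
  have e1 : ∀ v : Fin J → ℝ, (∑ j, v j * f ((Pi.single j (1:ℝ) : Fin J → ℝ), 0))
      = α * -(∑ j, u j * v j) := by
    intro v
    calc (∑ j, v j * f ((Pi.single j (1:ℝ) : Fin J → ℝ), 0))
        = ∑ j, α * -(u j * v j) := Finset.sum_congr rfl fun j _ => by rw [hwu j]; ring
      _ = α * -(∑ j, u j * v j) := by
          simp only [mul_neg, Finset.sum_neg_distrib, Finset.mul_sum]
  have e2 : ∀ M : Fin J → Fin J → ℝ, (∑ i, ∑ j, M i j *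
        f (0, ((Pi.single i (Pi.single j (1:ℝ)) : Fin J → Fin J → ℝ), 0)))
      = α * -(∑ i, ∑ j, M i j * Y i j) := by
    intro M
    calc (∑ i, ∑ j, M i j *
          f (0, ((Pi.single i (Pi.single j (1:ℝ)) : Fin J → Fin J → ℝ), 0)))
        = ∑ i, ∑ j, α * -(M i j * Y i j) :=
          Finset.sum_congr rfl fun i _ => Finset.sum_congr rfl fun j _ => by rw [hwY i j]; ring
      _ = α * -(∑ i, ∑ j, M i j * Y i j) := by
          simp only [mul_neg, Finset.sum_neg_distrib, Finset.mul_sum]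
  set s0 : ℝ := vs + ε - (∑ j, u j * μ0 j) - frob S0 Y with hs0
  refine ⟨s0, u, Y, ?_, by rw [hs0]; ring⟩
  intro k
  have hkC : Tmap c ξ μ0 (Pi.single k 1) ∈ C := ⟨_, single_mem_simplex k, rfl⟩
  have h1 : f (Tmap c ξ μ0 (Pi.single k 1)) < u0 := hfu _ hkC
  have h2 : u0 < f (μ0, (N, vs + ε)) := hux
  rw [Tmap_single] at h1
  rw [hexp] at h1
  rw [hexp] at h2
  beta_reduce at h1
  rw [e1, e2] at h1
  rw [e1 μ0, e2 N] at h2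
  have h12 := h1.trans h2
  have h4 : α * (c k - ((∑ j, u j * ξ k j) + ∑ i, ∑ j, (ξ k i - μ0 i) * (ξ k j - μ0 j) * Y i j))
      < α * ((vs + ε) - ((∑ j, u j * μ0 j) + ∑ i, ∑ j, N i j * Y i j)) := by
    ring_nf
    ring_nf at h12
    linarith
  have h5 := lt_of_mul_lt_mul_left h4 hα.le
  have hfMk : frob (Matrix.vecMulVec (fun j => ξ k j - μ0 j) (fun j => ξ k j - μ0 j)) Y
      = ∑ i, ∑ j, (ξ k i - μ0 i) * (ξ k j - μ0 j) * Y i j := by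
    simp [frob, Matrix.vecMulVec_apply]
  have hfS : frob S0 Y = ∑ i, ∑ j, N i j * Y i j := rfl
  rw [hs0, hfMk]
  rw [hfS] at *
  linarith

lemma weak_dual (c : Fin K → ℝ) (ξ : Fin K → Fin J → ℝ) (μ0 : Fin J → ℝ)
    (S0 : Matrix (Fin J) (Fin J) ℝ) {p : Fin K → ℝ} (hp : p ∈ Type2Set K J ξ μ0 S0)
    {s : ℝ} {u : Fin J → ℝ} {Y : Matrix (Fin J) (Fin J) ℝ}
    (hfeas : ∀ k, c k ≤ s + (∑ j, u j * ξ k j) +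
      frob (Matrix.vecMulVec (fun j => ξ k j - μ0 j) (fun j => ξ k j - μ0 j)) Y) :
    ∑ k, p k * c k ≤ s + (∑ j, u j * μ0 j) + frob S0 Y := by
  obtain ⟨hpos, hsum, hmean, hcov⟩ := hp
  have step1 : ∑ k, p k * c k ≤ ∑ k, p k * (s + (∑ j, u j * ξ k j) +
      frob (Matrix.vecMulVec (fun j => ξ k j - μ0 j) (fun j => ξ k j - μ0 j)) Y) :=
    Finset.sum_le_sum fun k _ => mul_le_mul_of_nonneg_left (hfeas k) (hpos k)
  refine step1.trans (le_of_eq ?_)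
  have hMk : ∀ k, frob (Matrix.vecMulVec (fun j => ξ k j - μ0 j) (fun j => ξ k j - μ0 j)) Y
      = ∑ i, ∑ j, (ξ k i - μ0 i) * (ξ k j - μ0 j) * Y i j := by
    intro k; simp [frob, Matrix.vecMulVec_apply]
  calc ∑ k, p k * (s + (∑ j, u j * ξ k j) +
        frob (Matrix.vecMulVec (fun j => ξ k j - μ0 j) (fun j => ξ k j - μ0 j)) Y)
      = (∑ k, p k * s) + (∑ k, p k * ∑ j, u j * ξ k j)
        + ∑ k, p k * ∑ i, ∑ j, (ξ k i - μ0 i) * (ξ k j - μ0 j) * Y i j := by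
        simp only [hMk]
        rw [← Finset.sum_add_distrib, ← Finset.sum_add_distrib]
        exact Finset.sum_congr rfl fun k _ => by ring
    _ = s + (∑ j, u j * μ0 j) + frob S0 Y := by
        congr 1
        · congr 1
          · rw [← Finset.sum_mul, hsum, one_mul]
          · simp only [Finset.mul_sum]
            rw [Finset.sum_comm]
            refine Finset.sum_congr rfl fun j _ => ?_
            rw [← hmean j, Finset.mul_sum]
            exact Finset.sum_congr rfl fun k _ => by ring
        · simp only [Finset.mul_sum]
          rw [Finset.sum_comm]
          show _ = frob S0 Y
          unfold frob
          refine Finset.sum_congr rfl fun i _ => ?_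
          rw [Finset.sum_comm]
          refine Finset.sum_congr rfl fun j _ => ?_
          rw [← hcov i j, Finset.sum_mul]
          exact Finset.sum_congr rfl fun k _ => by ring

lemma sInf_eq_of_approx {A B : Set ℝ} (hA : A.Nonempty) (hB : B.Nonempty)
    (h1 : ∀ b ∈ B, ∃ a ∈ A, a ≤ b)
    (h2 : ∀ a ∈ A, ∀ ε : ℝ, 0 < ε → ∃ b ∈ B, b ≤ a + ε) : sInf A = sInf B := by
  have hlb : lowerBounds A = lowerBounds B := by
    ext x
    constructor
    · intro hx b hb; obtain ⟨a, ha, hab⟩ := h1 b hb; exact (hx ha).trans hab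
    · intro hx a ha
      refine le_of_forall_pos_le_add fun ε hε => ?_
      obtain ⟨b, hb, hba⟩ := h2 a ha ε hε
      exact (hx hb).trans hba
  by_cases hbdd : BddBelow A
  · have hbddB : BddBelow B := by rwa [BddBelow, hlb] at hbdd
    apply le_antisymm
    · refine le_csInf hB fun b hb => ?_
      obtain ⟨a, ha, hab⟩ := h1 b hb
      exact (csInf_le hbdd ha).trans hab
    · refine le_csInf hA fun a ha => ?_
      have hmem : sInf B ∈ lowerBounds B := fun y hy => csInf_le hbddB hy
      rw [← hlb] at hmem
      exact hmem ha
  · have hbddB : ¬ BddBelow B := by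
      intro h; exact hbdd (by rwa [BddBelow, ← hlb] at h)
    rw [Real.sInf_of_not_bddBelow hbdd, Real.sInf_of_not_bddBelow hbddB]

end

theorem stmt2 (I d K J : ℕ) (hI : 0 < I) (hd : 0 < d) (hK : 0 < K) (hJ : 0 < J)
    (X : Set ((Fin I → ℝ) × (Fin d → ℝ))) (hXne : X.Nonempty)
    (hXbin : ∀ z ∈ X, ∀ i, z.1 i = 0 ∨ z.1 i = 1)
    (g : (Fin I → ℝ) × (Fin d → ℝ) → ℝ)
    (Q : (Fin I → ℝ) → Fin K → ℝ)
    (ξ : Fin K → Fin J → ℝ)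
    (μ : (Fin I → ℝ) → Fin J → ℝ)
    (S : (Fin I → ℝ) → Matrix (Fin J) (Fin J) ℝ)
    (hne : ∀ x : Fin I → ℝ, (∃ y, (x, y) ∈ X) → (Type2Set K J ξ (μ x) (S x)).Nonempty) :
    sInf {v : ℝ | ∃ z ∈ X,
        v = g z + sSup {r : ℝ | ∃ p ∈ Type2Set K J ξ (μ z.1) (S z.1),
          r = ∑ k, p k * Q z.1 k}} =
    sInf {v : ℝ | ∃ z ∈ X, ∃ s : ℝ, ∃ u : Fin J → ℝ, ∃ Y : Matrix (Fin J) (Fin J) ℝ,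
        (∀ k, Q z.1 k ≤ s + (∑ j, u j * ξ k j) +
          frob (Matrix.vecMulVec (fun j => ξ k j - μ z.1 j) (fun j => ξ k j - μ z.1 j)) Y) ∧
        v = g z + s + (∑ j, u j * μ z.1 j) + frob (S z.1) Y} := by
  apply sInf_eq_of_approx
  · obtain ⟨z, hz⟩ := hXne
    exact ⟨_, z, hz, rfl⟩
  · obtain ⟨z, hz⟩ := hXne
    have hnez := hne z.1 ⟨z.2, by simpa using hz⟩
    obtain ⟨s, u, Y, hfeas, hval⟩ := strong_dual (Q z.1) ξ (μ z.1) (S z.1) hnez one_pos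
    exact ⟨_, z, hz, s, u, Y, hfeas, rfl⟩
  · rintro b ⟨z, hz, s, u, Y, hfeas, rfl⟩
    have hnez := hne z.1 ⟨z.2, by simpa using hz⟩
    refine ⟨g z + sSup {r : ℝ | ∃ p ∈ Type2Set K J ξ (μ z.1) (S z.1),
      r = ∑ k, p k * Q z.1 k}, ⟨z, hz, rfl⟩, ?_⟩
    have hg := t2_greatest (Q z.1) ξ (μ z.1) (S z.1) hnez
    obtain ⟨p, hp, heq⟩ := hg.1
    have hw := weak_dual (Q z.1) ξ (μ z.1) (S z.1) hp hfeas
    rw [heq]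
    linarith
  · rintro a ⟨z, hz, rfl⟩ ε hε
    have hnez := hne z.1 ⟨z.2, by simpa using hz⟩
    obtain ⟨s, u, Y, hfeas, hval⟩ := strong_dual (Q z.1) ξ (μ z.1) (S z.1) hnez hε
    refine ⟨g z + s + (∑ j, u j * μ z.1 j) + frob (S z.1) Y,
      ⟨z, hz, s, u, Y, hfeas, rfl⟩, ?_⟩
    linarith
end

section
/- Let I, d, K, m be positive integers, let X ⊆ {0,1}^I × ℝ^d be nonempty, let g : {0,1}^I × ℝ^d → ℝ, let Q : {0,1}^I × {1,…,K} → ℝ, let λ ∈ [0,1] and risk level α ∈ (0,1). Let a₁,…,a_K ∈ ℝ^m and let l, u : {0,1}^I → ℝ^m, p̲, p̄ : {0,1}^I → ℝ^K; for x ∈ {0,1}^I set P₁(x) = {p ∈ ℝ^K : p ≥ 0, p̲(x) ≤ p ≤ p̄(x), l(x) ≤ Σ_k p_k a_k ≤ u(x)} and Q(p) = {q ∈ ℝ^K : 0 ≤ q_k ≤ p_k λ/(1−α) for all k, Σ_k q_k = λ}. Assume that for every x in the projection X̂ = {x : ∃ y, (x,y) ∈ X} there exist p ∈ P₁(x) and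 q ∈ Q(p). Then inf over (x,y) ∈ X of [ g(x,y) + sup { (1−λ) Σ_k p_k Q(x,k) + Σ_k q_k Q(x,k) : p ∈ P₁(x), q ∈ Q(p) } ] equals inf of g(x,y) + λ θ − aᵀ l(x) + bᵀ u(x) − γ̲ᵀ p̲(x) + γ̄ᵀ p̄(x) over all (x,y) ∈ X, θ ∈ ℝ, π ∈ ℝ^K with π ≥ 0, a, b ∈ ℝ^m with a ≥ 0, b ≥ 0, and γ̲, γ̄ ∈ ℝ^K with γ̲ ≥ 0, γ̄ ≥ 0, subject to: π_k + θ ≥ Q(x,k) for all k, and −(λ/(1−α)) π_k + (−a+b)ᵀ a_k − γ̲_k + γ̄_k ≥ (1−λ) Q(x,k) for all k. -/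
open scoped BigOperators

/-- CVaR-multiplier set `Q(p) = {q : 0 ≤ q_k ≤ p_k λ/(1−α), Σ_k q_k = λ}`. -/
def CVaRSet (K : ℕ) (lam alp : ℝ) (p : Fin K → ℝ) : Set (Fin K → ℝ) :=
  {q | (∀ k, 0 ≤ q k ∧ q k ≤ p k * (lam / (1 - alp))) ∧ (∑ k, q k) = lam}


open scoped BigOperators InnerProductSpace

section Cone
variable {E : Type*} [NormedAddCommGroup E] [InnerProductSpace ℝ E] [FiniteDimensional ℝ E]
variable {ι : Type*} [Fintype ι]

/-- finitely generated cone -/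
def coneOf (v : ι → E) : Set E :=
  {x | ∃ c : ι → ℝ, (∀ i, 0 ≤ c i) ∧ ∑ i, c i • v i = x}

open Classical in
lemma carath_aux (v : ι → E) :
    ∀ N (c : ι → ℝ), (Finset.univ.filter (fun i => c i ≠ 0)).card ≤ N → (∀ i, 0 ≤ c i) →
    ∃ (s : Finset ι), LinearIndependent ℝ (fun i : s => v i) ∧
      ∃ d : ι → ℝ, (∀ i, 0 ≤ d i) ∧ (∀ i ∉ s, d i = 0) ∧ ∑ i, d i • v i = ∑ i, c i • v i := by
  intro N
  induction N with
  | zero =>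
      intro c hcard _
      have hzero : ∀ i, c i = 0 := by
        intro i
        by_contra h
        have : i ∈ Finset.univ.filter (fun i => c i ≠ 0) := by simp [h]
        have := Finset.card_pos.mpr ⟨i, this⟩
        omega
      refine ⟨∅, ?_, 0, by simp, by simp, by simp [hzero]⟩
      have : IsEmpty ((∅ : Finset ι) : Set ι) := by simp
      exact linearIndependent_empty_type
  | succ N ih =>
      intro c hcard hc
      set s := Finset.univ.filter (fun i => c i ≠ 0) with hs
      by_cases hli : LinearIndependent ℝ (fun i : s => v i)
      · exact ⟨s, hli, c, hc, fun i hi => by simpa [hs] using hi, rfl⟩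
      · -- get a dependence relation
        obtain ⟨g, hgsum, j0, hj0⟩ := Fintype.not_linearIndependent_iff.mp hli
        set d : ι → ℝ := fun i => if h : i ∈ s then g ⟨i, h⟩ else 0 with hd
        have hsupp : ∀ i ∉ s, d i = 0 := fun i hi => by simp [hd, hi]
        have hdsum : ∑ i, d i • v i = 0 := by
          rw [← hgsum]
          rw [← Finset.sum_subset (Finset.subset_univ s)
            (fun x _ hx => by simp [hd, hx])]
          rw [← Finset.sum_attach s (fun i => d i • v i)]
          exact Finset.sum_congr rfl fun i _ => by simp [hd, i.2]
        have hdj0 : d (j0 : ι) ≠ 0 := by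
          simpa [hd, j0.2] using hj0
        -- pick e = d or -d so that e has a positive entry
        obtain ⟨e, hes, hesum, hepos⟩ :
            ∃ e : ι → ℝ, (∀ i ∉ s, e i = 0) ∧ (∑ i, e i • v i = 0) ∧ ∃ i, 0 < e i := by
          rcases lt_or_gt_of_ne hdj0 with hneg | hpos
          · exact ⟨-d, fun i hi => by simp [hsupp i hi], by simp [hdsum], ⟨j0, by simpa using hneg⟩⟩
          · exact ⟨d, hsupp, hdsum, ⟨j0, hpos⟩⟩
        set T := Finset.univ.filter (fun i => 0 < e i) with hT
        have hTne : T.Nonempty := ⟨hepos.choose, by simp [hT, hepos.choose_spec]⟩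
        obtain ⟨i0, hi0T, hi0min⟩ := T.exists_min_image (fun i => c i / e i) hTne
        have hei0 : 0 < e i0 := by simpa [hT] using hi0T
        set t := c i0 / e i0 with ht
        have ht0 : 0 ≤ t := div_nonneg (hc i0) hei0.le
        set c' : ι → ℝ := fun i => c i - t * e i with hc'
        have hc'nonneg : ∀ i, 0 ≤ c' i := by
          intro i
          rcases le_or_gt (e i) 0 with h | h
          · have : t * e i ≤ 0 := mul_nonpos_of_nonneg_of_nonpos ht0 h
            simp only [hc']; linarith [hc i]
          · have hiT : i ∈ T := by simp [hT, h]
            have h1 : t * e i ≤ c i := (le_div_iff₀ h).mp (hi0min i hiT)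
            simp only [hc']; linarith
        have hc'sum : ∑ i, c' i • v i = ∑ i, c i • v i := by
          simp only [hc', sub_smul, Finset.sum_sub_distrib, mul_smul, ← Finset.smul_sum, hesum,
            smul_zero, sub_zero]
        have hi0s : i0 ∈ s := by
          by_contra h
          exact absurd (hes i0 h) hei0.ne'
        have hc'i0 : c' i0 = 0 := by
          simp only [hc', ht]; field_simp; ring
        have hsubset : Finset.univ.filter (fun i => c' i ≠ 0) ⊆ s.erase i0 := by
          intro i hi
          simp only [Finset.mem_filter, Finset.mem_univ, true_and] at hi
          refine Finset.mem_erase.mpr ⟨?_, ?_⟩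
          · rintro rfl; exact hi hc'i0
          · by_contra h
            have hci : c i = 0 := by
              by_contra hci
              exact h (by simp [hs, hci])
            exact hi (by simp [hc', hci, hes i h])
        have hcard' : (Finset.univ.filter (fun i => c' i ≠ 0)).card ≤ N := by
          have h1 := Finset.card_le_card hsubset
          have h2 : (s.erase i0).card < s.card := Finset.card_erase_lt_of_mem hi0s
          omega
        obtain ⟨s', hli', d', hd'0, hd's, hd'sum⟩ := ih c' hcard' hc'nonneg
        exact ⟨s', hli', d', hd'0, hd's, by rw [hd'sum, hc'sum]⟩

lemma coneOf_closed (v : ι → E) : IsClosed (coneOf v) := by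
  classical
  have key : coneOf v = ⋃ (s : {s : Finset ι // LinearIndependent ℝ (fun i : s => v i)}),
      {x | ∃ c : {i // i ∈ (s : Finset ι)} → ℝ, (∀ i, 0 ≤ c i) ∧ ∑ i, c i • v (i : ι) = x} := by
    ext x
    constructor
    · rintro ⟨c, hc, rfl⟩
      obtain ⟨s, hli, d, hd0, hds, hdsum⟩ :=
        carath_aux v (Finset.univ.filter (fun i => c i ≠ 0)).card c le_rfl hc
      refine Set.mem_iUnion.mpr ⟨⟨s, hli⟩, ⟨fun i => d (i : ι), fun i => hd0 (i : ι), ?_⟩⟩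
      rw [← hdsum]
      rw [← Finset.sum_subset (Finset.subset_univ s) (fun x _ hx => by simp [hds x hx])]
      rw [← Finset.sum_attach s (fun i => d i • v i)]
      rfl
    · intro hx
      obtain ⟨s, c, hc, rfl⟩ := Set.mem_iUnion.mp hx
      refine ⟨fun i => if h : i ∈ (s : Finset ι) then c ⟨i, h⟩ else 0, fun i => ?_, ?_⟩
      · dsimp only; split
        · exact hc _
        · exact le_refl 0
      · rw [← Finset.sum_subset (Finset.subset_univ (s : Finset ι))
          (fun x _ hx => by simp [hx])]
        rw [← Finset.sum_attach (s : Finset ι)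
          (fun i => (if h : i ∈ (s : Finset ι) then c ⟨i, h⟩ else 0) • v i)]
        exact Finset.sum_congr rfl fun i _ => by simp [i.2]
  rw [key]
  apply isClosed_iUnion_of_finite
  rintro ⟨s, hli⟩
  let f : ({i // i ∈ s} → ℝ) →ₗ[ℝ] E :=
    { toFun := fun c => ∑ i, c i • v (i : ι)
      map_add' := by intro c₁ c₂; simp [add_smul, Finset.sum_add_distrib]
      map_smul' := by intro r c; simp [mul_smul, Finset.smul_sum] }
  have hker : LinearMap.ker f = ⊥ := by
    rw [LinearMap.ker_eq_bot']
    intro c hc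
    exact funext ((Fintype.linearIndependent_iff.mp hli) c hc)
  have hemb : Topology.IsClosedEmbedding f := LinearMap.isClosedEmbedding_of_injective hker
  have himg : {x : E | ∃ c : {i // i ∈ (s : Finset ι)} → ℝ, (∀ i, 0 ≤ c i) ∧ ∑ i, c i • v (i:ι) = x}
      = f '' {c | ∀ i, 0 ≤ c i} := by
    ext x; constructor
    · rintro ⟨c, hc, rfl⟩; exact ⟨c, hc, rfl⟩
    · rintro ⟨c, hc, rfl⟩; exact ⟨c, hc, rfl⟩
  rw [himg]
  apply hemb.isClosedMap
  have : {c : {i // i ∈ s} → ℝ | ∀ i, 0 ≤ c i} = Set.pi Set.univ (fun _ => Set.Ici (0:ℝ)) := by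
    ext c
    simp only [Set.mem_pi, Set.mem_univ, Set.mem_Ici, forall_true_left, Set.mem_setOf_eq]
  rw [this]
  exact isClosed_set_pi (fun i _ => isClosed_Ici)

/-- Farkas: if `b` is not in the cone generated by `v`, there is a separating `y`. -/
lemma farkas_sep [CompleteSpace E] (v : ι → E) {b : E} (hb : b ∉ coneOf v) :
    ∃ y : E, (∀ i, 0 ≤ ⟪v i, y⟫_ℝ) ∧ ⟪y, b⟫_ℝ < 0 := by
  classical
  let K : ProperCone ℝ E :=
    { carrier := coneOf v
      zero_mem' := ⟨0, by simp, by simp⟩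
      smul_mem' := by
        rintro r x ⟨c, hc, rfl⟩
        refine ⟨fun i => r.1 * c i, fun i => mul_nonneg r.2 (hc i), ?_⟩
        simp only [mul_smul, Finset.smul_sum]
        rfl
      add_mem' := by
        rintro x y ⟨c, hc, rfl⟩ ⟨c', hc', rfl⟩
        exact ⟨fun i => c i + c' i, fun i => add_nonneg (hc i) (hc' i),
          by simp [add_smul, Finset.sum_add_distrib]⟩
      isClosed' := coneOf_closed v }
  have hne : (K : Set E).Nonempty := ⟨0, ⟨0, by simp, by simp⟩⟩
  obtain ⟨y, hy1, hy2⟩ :=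
    ProperCone.hyperplane_separation' K (x₀ := b) hb
  refine ⟨y, fun i => ?_, by rw [real_inner_comm]; exact hy2⟩
  apply hy1
  refine ⟨fun j => if j = i then 1 else 0, fun j => ?_, ?_⟩
  · dsimp only; split <;> norm_num
  · simp [ite_smul]

end Cone

section Gale
variable {R n : Type*} [Fintype R] [Fintype n] [DecidableEq R]

noncomputable def toE : (R → ℝ) ≃ₗ[ℝ] EuclideanSpace ℝ R :=
  (WithLp.linearEquiv 2 ℝ (R → ℝ)).symm

lemma inner_toE (f g : R → ℝ) :
    ⟪(toE f : EuclideanSpace ℝ R), toE g⟫_ℝ = ∑ r, f r * g r := by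
  rw [PiLp.inner_apply]
  apply Finset.sum_congr rfl
  intro r _
  simp [toE, RCLike.inner_apply, WithLp.linearEquiv_symm_apply]
  ring

lemma gale (A : R → n → ℝ) (b : R → ℝ)
    (hinfeas : ¬ ∃ x : n → ℝ, ∀ r, ∑ j, A r j * x j ≤ b r) :
    ∃ y : R → ℝ, (∀ r, 0 ≤ y r) ∧ (∀ j, ∑ r, y r * A r j = 0) ∧ ∑ r, y r * b r < 0 := by
  classical
  set w : (n ⊕ n) ⊕ R → (R → ℝ) := fun i =>
    match i with
    | Sum.inl (Sum.inl j) => fun r => A r j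
    | Sum.inl (Sum.inr j) => fun r => -A r j
    | Sum.inr r0 => Pi.single r0 1
    with hw
  set v : (n ⊕ n) ⊕ R → EuclideanSpace ℝ R := fun i => toE (w i) with hv
  have hb : toE b ∉ coneOf v := by
    rintro ⟨c, hc, hsum⟩
    apply hinfeas
    refine ⟨fun j => c (Sum.inl (Sum.inl j)) - c (Sum.inl (Sum.inr j)), fun r => ?_⟩
    have hsum' : ∑ i, c i • w i = b := by
      have := congrArg toE.symm hsum
      simpa only [hv, map_sum, map_smul, LinearEquiv.symm_apply_apply] using this
    have h := congrFun hsum' r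
    simp only [Finset.sum_apply, Pi.smul_apply, smul_eq_mul] at h
    rw [Fintype.sum_sum_type, Fintype.sum_sum_type] at h
    have hsingle : ∑ r0, c (Sum.inr r0) * (Pi.single r0 1 : R → ℝ) r = c (Sum.inr r) := by
      rw [Finset.sum_eq_single r]
      · simp
      · intro r0 _ hne; simp [Pi.single_apply, hne]
      · simp
    simp only [hw] at h
    rw [hsingle] at h
    have hx : ∑ j, A r j * (c (Sum.inl (Sum.inl j)) - c (Sum.inl (Sum.inr j)))
        = (∑ x, c (Sum.inl (Sum.inl x)) * A r x) + ∑ x, c (Sum.inl (Sum.inr x)) * -A r x := by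
      rw [← Finset.sum_add_distrib]
      apply Finset.sum_congr rfl
      intro j _; ring
    rw [hx]
    linarith [hc (Sum.inr r)]
  obtain ⟨y, hy1, hy2⟩ := farkas_sep v hb
  set yf : R → ℝ := toE.symm y with hyf
  have hy : y = toE yf := by rw [hyf, LinearEquiv.apply_symm_apply]
  refine ⟨yf, fun r => ?_, fun j => ?_, ?_⟩
  · have := hy1 (Sum.inr r)
    rw [hv, hy, inner_toE] at this
    simpa [hw, Pi.single_apply, Finset.sum_ite_eq'] using this
  · have h1 := hy1 (Sum.inl (Sum.inl j))
    have h2 := hy1 (Sum.inl (Sum.inr j))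
    rw [hv, hy, inner_toE] at h1 h2
    simp only [hw] at h1 h2
    have e2 : ∑ r, (-A r j) * yf r = -∑ r, A r j * yf r := by
      rw [← Finset.sum_neg_distrib]; apply Finset.sum_congr rfl; intro r _; ring
    rw [e2] at h2
    have h0 : ∑ r, A r j * yf r = 0 := le_antisymm (by linarith) h1
    rw [← h0]
    apply Finset.sum_congr rfl; intro r _; ring
  · rw [hy, real_inner_comm, inner_toE] at hy2
    calc ∑ r, yf r * b r = ∑ r, b r * yf r := by
          apply Finset.sum_congr rfl; intro r _; ring
      _ < 0 := hy2
end Gale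

section LP
variable {R n : Type*} [Fintype R] [Fintype n]

lemma lp_weak (A : R → n → ℝ) (b : R → ℝ) (c : n → ℝ) (x : n → ℝ) (y : R → ℝ)
    (hx : ∀ r, ∑ j, A r j * x j ≤ b r) (hy0 : ∀ r, 0 ≤ y r)
    (hyA : ∀ j, ∑ r, y r * A r j = c j) :
    ∑ j, c j * x j ≤ ∑ r, y r * b r := by
  have key : ∑ j, c j * x j = ∑ r, y r * ∑ j, A r j * x j := by
    simp_rw [Finset.mul_sum]
    rw [Finset.sum_comm]
    apply Finset.sum_congr rfl
    intro j _
    rw [← hyA j, Finset.sum_mul]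
    apply Finset.sum_congr rfl
    intro r _; ring
  rw [key]
  apply Finset.sum_le_sum
  intro r _
  exact mul_le_mul_of_nonneg_left (hx r) (hy0 r)

lemma lp_strong (A : R → n → ℝ) (b : R → ℝ) (c : n → ℝ) (x₀ : n → ℝ)
    (hx₀ : ∀ r, ∑ j, A r j * x₀ j ≤ b r) (V : ℝ)
    (hV : ∀ x : n → ℝ, (∀ r, ∑ j, A r j * x j ≤ b r) → ∑ j, c j * x j ≤ V)
    {ε : ℝ} (hε : 0 < ε) :
    ∃ y : R → ℝ, (∀ r, 0 ≤ y r) ∧ (∀ j, ∑ r, y r * A r j = c j) ∧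
      ∑ r, y r * b r < V + ε := by
  classical
  set A' : R ⊕ Unit → n → ℝ := fun ρ => match ρ with
    | Sum.inl r => A r
    | Sum.inr _ => fun j => -c j
    with hA'
  set b' : R ⊕ Unit → ℝ := fun ρ => match ρ with
    | Sum.inl r => b r
    | Sum.inr _ => -(V + ε)
    with hb'
  have hinfeas : ¬ ∃ x : n → ℝ, ∀ ρ, ∑ j, A' ρ j * x j ≤ b' ρ := by
    rintro ⟨x, hx⟩
    have h1 : ∀ r, ∑ j, A r j * x j ≤ b r := fun r => hx (Sum.inl r)
    have h2 := hx (Sum.inr ())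
    simp only [hA', hb'] at h2
    have h3 : ∑ j, (-c j) * x j = -∑ j, c j * x j := by
      rw [← Finset.sum_neg_distrib]; apply Finset.sum_congr rfl; intro j _; ring
    rw [h3] at h2
    have := hV x h1
    linarith
  obtain ⟨y', hy'0, hy'A, hy'b⟩ := gale A' b' hinfeas
  rw [Fintype.sum_sum_type] at hy'b
  set μ := y' (Sum.inr ()) with hμ
  have hAj : ∀ j, (∑ r, y' (Sum.inl r) * A r j) - μ * c j = 0 := by
    intro j
    have := hy'A j
    rw [Fintype.sum_sum_type] at this
    simpa [hA', mul_comm, mul_neg, ← hμ, sub_eq_add_neg] using this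
  have hbsum : (∑ r, y' (Sum.inl r) * b r) - μ * (V + ε) < 0 := by
    have : ∑ x : Unit, y' (Sum.inr x) * b' (Sum.inr x) = -(μ * (V + ε)) := by
      simp only [hb', hμ, Fintype.sum_unique]
      ring
    rw [this] at hy'b
    simpa [hA', hb', sub_eq_add_neg] using hy'b
  have hμky : 0 ≤ μ := hμ ▸ hy'0 (Sum.inr ())
  rcases eq_or_lt_of_le hμky with hμ0 | hμpos
  · -- μ = 0 : contradiction with primal feasibility
    exfalso
    have hμ0' : μ = 0 := hμ0.symm
    have hA0 : ∀ j, ∑ r, y' (Sum.inl r) * A r j = 0 := by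
      intro j; have := hAj j; rw [hμ0'] at this; simpa using this
    have hb0 : ∑ r, y' (Sum.inl r) * b r < 0 := by
      have := hbsum; rw [hμ0'] at this; simpa using this
    have : (0:ℝ) ≤ ∑ r, y' (Sum.inl r) * b r := by
      have h := lp_weak A b (fun _ => 0) x₀ (fun r => y' (Sum.inl r)) hx₀
        (fun r => hy'0 (Sum.inl r)) (fun j => hA0 j)
      simpa using h
    linarith
  · refine ⟨fun r => y' (Sum.inl r) / μ, fun r => div_nonneg (hy'0 (Sum.inl r)) hμpos.le,
      fun j => ?_, ?_⟩
    · have hmc : ∑ r, y' (Sum.inl r) * A r j = μ * c j := by linarith [hAj j]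
      have hdiv : ∑ r, y' (Sum.inl r) / μ * A r j = (∑ r, y' (Sum.inl r) * A r j) / μ := by
        rw [Finset.sum_div]; apply Finset.sum_congr rfl; intro r _; ring
      rw [hdiv, hmc, mul_comm, mul_div_assoc, div_self hμpos.ne', mul_one]
    · have hdiv : ∑ r, y' (Sum.inl r) / μ * b r = (∑ r, y' (Sum.inl r) * b r) / μ := by
        rw [Finset.sum_div]; apply Finset.sum_congr rfl; intro r _; ring
      rw [hdiv, div_lt_iff₀ hμpos]
      nlinarith [hbsum]
end LP

section App

variable {K m : ℕ}

abbrev Rty (K m : ℕ) := Fin K ⊕ (Fin K ⊕ (Fin K ⊕ (Fin m ⊕ (Fin m ⊕ (Fin K ⊕ (Fin K ⊕ (Unit ⊕ Unit)))))))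
abbrev Nty (K : ℕ) := Fin K ⊕ Fin K

variable (lam alp : ℝ) (a : Fin K → Fin m → ℝ)
variable (Qx : Fin K → ℝ) (lx ux : Fin m → ℝ) (pl ph : Fin K → ℝ)

noncomputable def Amat : Rty K m → Nty K → ℝ :=
  Sum.elim (fun k => Sum.elim (fun k' => if k' = k then (-1:ℝ) else 0) (fun _ => 0)) <|
  Sum.elim (fun k => Sum.elim (fun k' => if k' = k then (-1:ℝ) else 0) (fun _ => 0)) <|
  Sum.elim (fun k => Sum.elim (fun k' => if k' = k then (1:ℝ) else 0) (fun _ => 0)) <|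
  Sum.elim (fun s => Sum.elim (fun k' => -(a k' s)) (fun _ => 0)) <|
  Sum.elim (fun s => Sum.elim (fun k' => a k' s) (fun _ => 0)) <|
  Sum.elim (fun k => Sum.elim (fun _ => 0) (fun k' => if k' = k then (-1:ℝ) else 0)) <|
  Sum.elim (fun k => Sum.elim (fun k' => if k' = k then -(lam/(1-alp)) else 0)
    (fun k' => if k' = k then (1:ℝ) else 0)) <|
  Sum.elim (fun _ : Unit => Sum.elim (fun _ => 0) (fun _ => (1:ℝ)))
           (fun _ : Unit => Sum.elim (fun _ => 0) (fun _ => (-1:ℝ)))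

def bvec : Rty K m → ℝ :=
  Sum.elim (fun _ => 0) <| Sum.elim (fun k => -pl k) <| Sum.elim ph <|
  Sum.elim (fun s => -lx s) <| Sum.elim ux <| Sum.elim (fun _ => 0) <|
  Sum.elim (fun _ => 0) <| Sum.elim (fun _ => lam) (fun _ => -lam)

def cvec : Nty K → ℝ := Sum.elim (fun k => (1 - lam) * Qx k) Qx

lemma feas_iff (xv : Nty K → ℝ) :
    (∀ r, ∑ j, Amat lam alp a r j * xv j ≤ bvec lam lx ux pl ph r) ↔
    ((xv ∘ Sum.inl) ∈ Type1Set K m a lx ux pl ph ∧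
      (xv ∘ Sum.inr) ∈ CVaRSet K lam alp (xv ∘ Sum.inl)) := by
  constructor
  · intro h
    have h1 : ∀ k, -xv (Sum.inl k) ≤ 0 := by
      intro k
      have := h (Sum.inl k)
      simpa [Amat, bvec, Fintype.sum_sum_type, ite_mul, Finset.sum_ite_eq'] using this
    have h2 : ∀ k, -xv (Sum.inl k) ≤ -pl k := by
      intro k
      have := h (Sum.inr (Sum.inl k))
      simpa [Amat, bvec, Fintype.sum_sum_type, ite_mul, Finset.sum_ite_eq'] using this
    have h3 : ∀ k, xv (Sum.inl k) ≤ ph k := by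
      intro k
      have := h (Sum.inr (Sum.inr (Sum.inl k)))
      simpa [Amat, bvec, Fintype.sum_sum_type, ite_mul, Finset.sum_ite_eq'] using this
    have h4 : ∀ s, -∑ k, a k s * xv (Sum.inl k) ≤ -lx s := by
      intro s
      have := h (Sum.inr (Sum.inr (Sum.inr (Sum.inl s))))
      simpa [Amat, bvec, Fintype.sum_sum_type, Finset.sum_neg_distrib] using this
    have h5 : ∀ s, ∑ k, a k s * xv (Sum.inl k) ≤ ux s := by
      intro s
      have := h (Sum.inr (Sum.inr (Sum.inr (Sum.inr (Sum.inl s)))))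
      simpa [Amat, bvec, Fintype.sum_sum_type] using this
    have h6 : ∀ k, -xv (Sum.inr k) ≤ 0 := by
      intro k
      have := h (Sum.inr (Sum.inr (Sum.inr (Sum.inr (Sum.inr (Sum.inl k))))))
      simpa [Amat, bvec, Fintype.sum_sum_type, ite_mul, Finset.sum_ite_eq'] using this
    have h7 : ∀ k, -(lam/(1-alp)) * xv (Sum.inl k) + xv (Sum.inr k) ≤ 0 := by
      intro k
      have := h (Sum.inr (Sum.inr (Sum.inr (Sum.inr (Sum.inr (Sum.inr (Sum.inl k)))))))
      simpa [Amat, bvec, Fintype.sum_sum_type, ite_mul, Finset.sum_ite_eq'] using this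
    have h8 : ∑ k, xv (Sum.inr k) ≤ lam := by
      have := h (Sum.inr (Sum.inr (Sum.inr (Sum.inr (Sum.inr (Sum.inr (Sum.inr (Sum.inl ()))))))))
      simpa [Amat, bvec, Fintype.sum_sum_type] using this
    have h9 : -∑ k, xv (Sum.inr k) ≤ -lam := by
      have := h (Sum.inr (Sum.inr (Sum.inr (Sum.inr (Sum.inr (Sum.inr (Sum.inr (Sum.inr ()))))))))
      simpa [Amat, bvec, Fintype.sum_sum_type, Finset.sum_neg_distrib] using this
    have hsum_comm : ∀ s, ∑ k, xv (Sum.inl k) * a k s = ∑ k, a k s * xv (Sum.inl k) := by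
      intro s; apply Finset.sum_congr rfl; intro k _; ring
    simp only [Type1Set, CVaRSet, Set.mem_setOf_eq, Function.comp_apply]
    refine ⟨⟨fun k => by linarith [h1 k], fun k => ⟨by linarith [h2 k], h3 k⟩,
      fun s => ⟨by rw [hsum_comm s]; linarith [h4 s], by rw [hsum_comm s]; exact h5 s⟩⟩,
      ⟨fun k => ⟨by linarith [h6 k], ?_⟩, le_antisymm h8 (by linarith [h9])⟩⟩
    have := h7 k
    have : xv (Sum.inr k) ≤ (lam/(1-alp)) * xv (Sum.inl k) := by linarith
    linarith [this, mul_comm (lam/(1-alp)) (xv (Sum.inl k))]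
  · intro hmem r
    simp only [Type1Set, CVaRSet, Set.mem_setOf_eq, Function.comp_apply] at hmem
    obtain ⟨⟨hp0, hbnd, hlu⟩, ⟨hq, hqs⟩⟩ := hmem
    have hsum_comm : ∀ s, ∑ k, xv (Sum.inl k) * a k s = ∑ k, a k s * xv (Sum.inl k) := by
      intro s; apply Finset.sum_congr rfl; intro k _; ring
    rcases r with k | k | k | s | s | k | k | u | u
    · simp only [Amat, bvec, Sum.elim_inl, Sum.elim_inr, Fintype.sum_sum_type, ite_mul,
        neg_mul, one_mul, zero_mul, Finset.sum_ite_eq', Finset.mem_univ, if_true,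
        Finset.sum_const_zero, add_zero]
      linarith [hp0 k]
    · simp only [Amat, bvec, Sum.elim_inl, Sum.elim_inr, Fintype.sum_sum_type, ite_mul,
        neg_mul, one_mul, zero_mul, Finset.sum_ite_eq', Finset.mem_univ, if_true,
        Finset.sum_const_zero, add_zero]
      linarith [(hbnd k).1]
    · simp only [Amat, bvec, Sum.elim_inl, Sum.elim_inr, Fintype.sum_sum_type, ite_mul,
        neg_mul, one_mul, zero_mul, Finset.sum_ite_eq', Finset.mem_univ, if_true,
        Finset.sum_const_zero, add_zero]
      linarith [(hbnd k).2]
    · simp only [Amat, bvec, Sum.elim_inl, Sum.elim_inr, Fintype.sum_sum_type,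
        neg_mul, zero_mul, Finset.sum_const_zero, add_zero, Finset.sum_neg_distrib]
      have := (hlu s).1
      rw [hsum_comm s] at this
      linarith
    · simp only [Amat, bvec, Sum.elim_inl, Sum.elim_inr, Fintype.sum_sum_type,
        zero_mul, Finset.sum_const_zero, add_zero]
      have := (hlu s).2
      rw [hsum_comm s] at this
      linarith
    · simp only [Amat, bvec, Sum.elim_inl, Sum.elim_inr, Fintype.sum_sum_type, ite_mul,
        neg_mul, one_mul, zero_mul, Finset.sum_ite_eq', Finset.mem_univ, if_true,
        Finset.sum_const_zero, zero_add]
      linarith [(hq k).1]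
    · simp only [Amat, bvec, Sum.elim_inl, Sum.elim_inr, Fintype.sum_sum_type, ite_mul,
        neg_mul, one_mul, zero_mul, Finset.sum_ite_eq', Finset.mem_univ, if_true,
        Finset.sum_const_zero, add_zero]
      have := (hq k).2
      linarith [mul_comm (xv (Sum.inl k)) (lam/(1-alp))]
    · simp only [Amat, bvec, Sum.elim_inl, Sum.elim_inr, Fintype.sum_sum_type,
        zero_mul, one_mul, Finset.sum_const_zero, zero_add]
      rw [hqs]
    · simp only [Amat, bvec, Sum.elim_inl, Sum.elim_inr, Fintype.sum_sum_type,
        zero_mul, neg_mul, one_mul, Finset.sum_const_zero, zero_add, Finset.sum_neg_distrib]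
      rw [hqs]

lemma obj_eq (xv : Nty K → ℝ) :
    ∑ j, cvec lam Qx j * xv j =
      (1 - lam) * (∑ k, xv (Sum.inl k) * Qx k) + ∑ k, xv (Sum.inr k) * Qx k := by
  rw [Fintype.sum_sum_type]
  simp only [cvec, Sum.elim_inl, Sum.elim_inr]
  rw [Finset.mul_sum]
  congr 1
  · apply Finset.sum_congr rfl; intro k _; ring
  · apply Finset.sum_congr rfl; intro k _; ring

def DualOK (θ : ℝ) (pv : Fin K → ℝ) (al be : Fin m → ℝ) (gl gu : Fin K → ℝ) : Prop :=
  (∀ k, 0 ≤ pv k) ∧ (∀ s, 0 ≤ al s) ∧ (∀ s, 0 ≤ be s) ∧ (∀ k, 0 ≤ gl k) ∧ (∀ k, 0 ≤ gu k) ∧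
  (∀ k, Qx k ≤ pv k + θ) ∧
  (∀ k, (1 - lam) * Qx k ≤
    -(lam / (1 - alp)) * pv k + (∑ s, (-(al s) + be s) * a k s) - gl k + gu k)

def dval (θ : ℝ) (al be : Fin m → ℝ) (gl gu : Fin K → ℝ) : ℝ :=
  lam * θ - (∑ s, al s * lx s) + (∑ s, be s * ux s)
    - (∑ k, gl k * pl k) + (∑ k, gu k * ph k)

lemma colsum_inl (y : Rty K m → ℝ) (k : Fin K) :
    ∑ r, y r * Amat lam alp a r (Sum.inl k) =
      -y (Sum.inl k) - y (Sum.inr (Sum.inl k)) + y (Sum.inr (Sum.inr (Sum.inl k)))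
      - (∑ s, y (Sum.inr (Sum.inr (Sum.inr (Sum.inl s)))) * a k s)
      + (∑ s, y (Sum.inr (Sum.inr (Sum.inr (Sum.inr (Sum.inl s))))) * a k s)
      - (lam/(1-alp)) * y (Sum.inr (Sum.inr (Sum.inr (Sum.inr (Sum.inr (Sum.inr (Sum.inl k))))))) := by
  simp only [Amat, Sum.elim_inl, Sum.elim_inr, Fintype.sum_sum_type, mul_ite, mul_zero, mul_one,
    mul_neg, Finset.sum_ite_eq, Finset.mem_univ, if_true, Finset.sum_const_zero,
    Finset.sum_neg_distrib, Fintype.sum_unique]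
  ring

lemma colsum_inr (y : Rty K m → ℝ) (k : Fin K) :
    ∑ r, y r * Amat lam alp a r (Sum.inr k) =
      -y (Sum.inr (Sum.inr (Sum.inr (Sum.inr (Sum.inr (Sum.inl k))))))
      + y (Sum.inr (Sum.inr (Sum.inr (Sum.inr (Sum.inr (Sum.inr (Sum.inl k)))))))
      + y (Sum.inr (Sum.inr (Sum.inr (Sum.inr (Sum.inr (Sum.inr (Sum.inr (Sum.inl ()))))))))
      - y (Sum.inr (Sum.inr (Sum.inr (Sum.inr (Sum.inr (Sum.inr (Sum.inr (Sum.inr ())))))))) := by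
  simp only [Amat, Sum.elim_inl, Sum.elim_inr, Fintype.sum_sum_type, mul_ite, mul_zero, mul_one,
    mul_neg, Finset.sum_ite_eq, Finset.mem_univ, if_true, Finset.sum_const_zero,
    Finset.sum_neg_distrib, Fintype.sum_unique]
  ring

lemma bsum_eq (y : Rty K m → ℝ) :
    ∑ r, y r * bvec lam lx ux pl ph r =
      -(∑ k, y (Sum.inr (Sum.inl k)) * pl k)
      + (∑ k, y (Sum.inr (Sum.inr (Sum.inl k))) * ph k)
      - (∑ s, y (Sum.inr (Sum.inr (Sum.inr (Sum.inl s)))) * lx s)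
      + (∑ s, y (Sum.inr (Sum.inr (Sum.inr (Sum.inr (Sum.inl s))))) * ux s)
      + lam * y (Sum.inr (Sum.inr (Sum.inr (Sum.inr (Sum.inr (Sum.inr (Sum.inr (Sum.inl ()))))))))
      - lam * y (Sum.inr (Sum.inr (Sum.inr (Sum.inr (Sum.inr (Sum.inr (Sum.inr (Sum.inr ())))))))) := by
  simp only [bvec, Sum.elim_inl, Sum.elim_inr, Fintype.sum_sum_type, mul_zero, mul_neg,
    Finset.sum_const_zero, Finset.sum_neg_distrib, Fintype.sum_unique]
  ring

lemma sum_split (al be : Fin m → ℝ) (k : Fin K) :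
    ∑ s, (-(al s) + be s) * a k s = -(∑ s, al s * a k s) + ∑ s, be s * a k s := by
  rw [← Finset.sum_neg_distrib, ← Finset.sum_add_distrib]
  apply Finset.sum_congr rfl; intro s _; ring

lemma dual_to_lp (θ : ℝ) (pv : Fin K → ℝ) (al be : Fin m → ℝ) (gl gu : Fin K → ℝ)
    (h : DualOK lam alp a Qx θ pv al be gl gu) :
    ∃ y : Rty K m → ℝ, (∀ r, 0 ≤ y r) ∧
      (∀ j, ∑ r, y r * Amat lam alp a r j = cvec lam Qx j) ∧
      ∑ r, y r * bvec lam lx ux pl ph r = dval lam lx ux pl ph θ al be gl gu := by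
  obtain ⟨h1, h2, h3, h4, h5, h6, h7⟩ := h
  set y : Rty K m → ℝ :=
    Sum.elim (fun k => -(lam / (1 - alp)) * pv k + (∑ s, (-(al s) + be s) * a k s)
        - gl k + gu k - (1 - lam) * Qx k) <|
    Sum.elim gl <| Sum.elim gu <| Sum.elim al <| Sum.elim be <|
    Sum.elim (fun k => pv k + θ - Qx k) <| Sum.elim pv <|
    Sum.elim (fun _ => max θ 0) (fun _ => max (-θ) 0)
    with hy
  have hmax : max θ 0 - max (-θ) 0 = θ := by
    rcases le_total θ 0 with hθ | hθ
    · rw [max_eq_right hθ, max_eq_left (by linarith)]; ring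
    · rw [max_eq_left hθ, max_eq_right (by linarith)]; ring
  refine ⟨y, ?_, ?_, ?_⟩
  · intro r
    rcases r with k | k | k | s | s | k | k | u | u <;>
      simp only [hy, Sum.elim_inl, Sum.elim_inr] <;>
      first
        | linarith [h7 k]
        | exact h4 k
        | exact h5 k
        | exact h2 s
        | exact h3 s
        | linarith [h6 k]
        | exact h1 k
        | exact le_max_right _ _
  · intro j
    rcases j with k | k
    · rw [colsum_inl]
      simp only [hy, Sum.elim_inl, Sum.elim_inr, cvec]
      rw [sum_split a al be k]
      ring
    · rw [colsum_inr]
      simp only [hy, Sum.elim_inl, Sum.elim_inr, cvec]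
      linarith [hmax]
  · rw [bsum_eq]
    simp only [hy, Sum.elim_inl, Sum.elim_inr, dval]
    have : lam * max θ 0 - lam * max (-θ) 0 = lam * θ := by
      rw [← mul_sub, hmax]
    linarith [this]

lemma lp_to_dual (y : Rty K m → ℝ) (hy0 : ∀ r, 0 ≤ y r)
    (hyA : ∀ j, ∑ r, y r * Amat lam alp a r j = cvec lam Qx j) :
    ∃ θ pv al be gl gu, DualOK lam alp a Qx θ pv al be gl gu ∧
      dval lam lx ux pl ph θ al be gl gu = ∑ r, y r * bvec lam lx ux pl ph r := by
  set y8 := y (Sum.inr (Sum.inr (Sum.inr (Sum.inr (Sum.inr (Sum.inr (Sum.inr (Sum.inl ())))))))) with hy8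
  set y9 := y (Sum.inr (Sum.inr (Sum.inr (Sum.inr (Sum.inr (Sum.inr (Sum.inr (Sum.inr ())))))))) with hy9
  refine ⟨y8 - y9,
    fun k => y (Sum.inr (Sum.inr (Sum.inr (Sum.inr (Sum.inr (Sum.inr (Sum.inl k))))))),
    fun s => y (Sum.inr (Sum.inr (Sum.inr (Sum.inl s)))),
    fun s => y (Sum.inr (Sum.inr (Sum.inr (Sum.inr (Sum.inl s))))),
    fun k => y (Sum.inr (Sum.inl k)),
    fun k => y (Sum.inr (Sum.inr (Sum.inl k))), ?_, ?_⟩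
  · refine ⟨fun k => hy0 _, fun s => hy0 _, fun s => hy0 _, fun k => hy0 _, fun k => hy0 _,
      fun k => ?_, fun k => ?_⟩
    · have := hyA (Sum.inr k)
      rw [colsum_inr] at this
      simp only [cvec, Sum.elim_inr] at this
      have h6 := hy0 (Sum.inr (Sum.inr (Sum.inr (Sum.inr (Sum.inr (Sum.inl k))))))
      linarith
    · have := hyA (Sum.inl k)
      rw [colsum_inl] at this
      simp only [cvec, Sum.elim_inl] at this
      have h1 := hy0 (Sum.inl k)
      rw [sum_split a]
      linarith
  · rw [bsum_eq]
    simp only [dval]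
    ring

lemma primal_bddAbove (hlam0 : 0 ≤ lam) (hlam1 : lam ≤ 1) (halp1 : alp < 1) :
    BddAbove {r : ℝ | ∃ p ∈ Type1Set K m a lx ux pl ph, ∃ q ∈ CVaRSet K lam alp p,
      r = (1 - lam) * (∑ k, p k * Qx k) + ∑ k, q k * Qx k} := by
  refine ⟨∑ k, (ph k * |Qx k| + (ph k * (lam/(1-alp))) * |Qx k|), ?_⟩
  rintro r ⟨p, hp, q, hq, rfl⟩
  obtain ⟨hp0, hbnd, -⟩ := hp
  obtain ⟨hqb, -⟩ := hq
  have hcoef : 0 ≤ lam / (1 - alp) := div_nonneg hlam0 (by linarith)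
  have hph : ∀ k, 0 ≤ ph k := fun k => le_trans (hp0 k) (hbnd k).2
  have term1 : ∀ k, p k * Qx k ≤ ph k * |Qx k| := fun k =>
    le_trans (mul_le_mul_of_nonneg_left (le_abs_self _) (hp0 k))
      (mul_le_mul_of_nonneg_right (hbnd k).2 (abs_nonneg _))
  have term2 : ∀ k, q k * Qx k ≤ (ph k * (lam/(1-alp))) * |Qx k| := fun k =>
    le_trans (mul_le_mul_of_nonneg_left (le_abs_self _) (hqb k).1)
      (mul_le_mul_of_nonneg_right
        (le_trans (hqb k).2 (mul_le_mul_of_nonneg_right (hbnd k).2 hcoef)) (abs_nonneg _))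
  have hS1 : ∑ k, p k * Qx k ≤ ∑ k, ph k * |Qx k| :=
    Finset.sum_le_sum (fun k _ => term1 k)
  have hS2 : ∑ k, q k * Qx k ≤ ∑ k, (ph k * (lam/(1-alp))) * |Qx k| :=
    Finset.sum_le_sum (fun k _ => term2 k)
  have hB0 : 0 ≤ ∑ k, ph k * |Qx k| :=
    Finset.sum_nonneg (fun k _ => mul_nonneg (hph k) (abs_nonneg _))
  have h1 : (1 - lam) * (∑ k, p k * Qx k) ≤ ∑ k, ph k * |Qx k| := by
    nlinarith
  rw [Finset.sum_add_distrib]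
  linarith

lemma primal_mem_iff (r : ℝ) :
    r ∈ {r : ℝ | ∃ p ∈ Type1Set K m a lx ux pl ph, ∃ q ∈ CVaRSet K lam alp p,
      r = (1 - lam) * (∑ k, p k * Qx k) + ∑ k, q k * Qx k} ↔
    ∃ xv : Nty K → ℝ, (∀ rr, ∑ j, Amat lam alp a rr j * xv j ≤ bvec lam lx ux pl ph rr) ∧
      r = ∑ j, cvec lam Qx j * xv j := by
  constructor
  · rintro ⟨p, hp, q, hq, rfl⟩
    refine ⟨Sum.elim p q, ?_, ?_⟩
    · rw [feas_iff]
      exact ⟨hp, hq⟩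
    · rw [obj_eq]
      simp only [Sum.elim_inl, Sum.elim_inr]
  · rintro ⟨xv, hfeas, rfl⟩
    obtain ⟨hp, hq⟩ := (feas_iff lam alp a lx ux pl ph xv).mp hfeas
    refine ⟨xv ∘ Sum.inl, hp, xv ∘ Sum.inr, hq, ?_⟩
    rw [obj_eq]
    simp only [Function.comp_apply]

lemma keyx (hlam0 : 0 ≤ lam) (hlam1 : lam ≤ 1) (halp1 : alp < 1)
    (hfe : ∃ p ∈ Type1Set K m a lx ux pl ph, (CVaRSet K lam alp p).Nonempty) :
    (∀ θ pv al be gl gu, DualOK lam alp a Qx θ pv al be gl gu →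
      sSup {r : ℝ | ∃ p ∈ Type1Set K m a lx ux pl ph, ∃ q ∈ CVaRSet K lam alp p,
        r = (1 - lam) * (∑ k, p k * Qx k) + ∑ k, q k * Qx k}
        ≤ dval lam lx ux pl ph θ al be gl gu) ∧
    (∀ ε : ℝ, 0 < ε → ∃ θ pv al be gl gu, DualOK lam alp a Qx θ pv al be gl gu ∧
      dval lam lx ux pl ph θ al be gl gu <
      sSup {r : ℝ | ∃ p ∈ Type1Set K m a lx ux pl ph, ∃ q ∈ CVaRSet K lam alp p,
        r = (1 - lam) * (∑ k, p k * Qx k) + ∑ k, q k * Qx k} + ε) := by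
  obtain ⟨p0, hp0, q0, hq0⟩ := hfe
  have hne : Set.Nonempty {r : ℝ | ∃ p ∈ Type1Set K m a lx ux pl ph,
      ∃ q ∈ CVaRSet K lam alp p,
      r = (1 - lam) * (∑ k, p k * Qx k) + ∑ k, q k * Qx k} :=
    ⟨_, p0, hp0, q0, hq0, rfl⟩
  have hbdd := primal_bddAbove lam alp a Qx lx ux pl ph hlam0 hlam1 halp1
  constructor
  · intro θ pv al be gl gu hOK
    obtain ⟨y, hy0, hyA, hyb⟩ := dual_to_lp lam alp a Qx lx ux pl ph θ pv al be gl gu hOK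
    apply csSup_le hne
    intro r hr
    rw [primal_mem_iff] at hr
    obtain ⟨xv, hfeas, rfl⟩ := hr
    calc ∑ j, cvec lam Qx j * xv j
        ≤ ∑ rr, y rr * bvec lam lx ux pl ph rr :=
          lp_weak (Amat lam alp a) (bvec lam lx ux pl ph) (cvec lam Qx) xv y hfeas hy0 hyA
      _ = dval lam lx ux pl ph θ al be gl gu := hyb
  · intro ε hε
    obtain ⟨xv₀, hfeas₀, -⟩ := (primal_mem_iff lam alp a Qx lx ux pl ph _).mp
      ⟨p0, hp0, q0, hq0, rfl⟩
    have hub : ∀ xv : Nty K → ℝ,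
        (∀ rr, ∑ j, Amat lam alp a rr j * xv j ≤ bvec lam lx ux pl ph rr) →
        ∑ j, cvec lam Qx j * xv j ≤ sSup {r : ℝ | ∃ p ∈ Type1Set K m a lx ux pl ph,
          ∃ q ∈ CVaRSet K lam alp p,
          r = (1 - lam) * (∑ k, p k * Qx k) + ∑ k, q k * Qx k} := by
      intro xv hf
      exact le_csSup hbdd ((primal_mem_iff lam alp a Qx lx ux pl ph _).mpr ⟨xv, hf, rfl⟩)
    obtain ⟨y, hy0, hyA, hyb⟩ := lp_strong (Amat lam alp a) (bvec lam lx ux pl ph)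
      (cvec lam Qx) xv₀ hfeas₀ _ hub hε
    obtain ⟨θ, pv, al, be, gl, gu, hOK, hval⟩ :=
      lp_to_dual lam alp a Qx lx ux pl ph y hy0 hyA
    exact ⟨θ, pv, al, be, gl, gu, hOK, by rw [hval]; exact hyb⟩

end App



lemma sInf_eq_of_approx_s8 (L R : Set ℝ) (hLne : L.Nonempty)
    (hwk : ∀ v ∈ R, ∃ w ∈ L, w ≤ v)
    (hst : ∀ w ∈ L, ∀ ε : ℝ, 0 < ε → ∃ v ∈ R, v < w + ε) : sInf L = sInf R := by
  have hRne : R.Nonempty := by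
    obtain ⟨w, hw⟩ := hLne
    obtain ⟨v, hv, -⟩ := hst w hw 1 one_pos
    exact ⟨v, hv⟩
  by_cases hbdd : BddBelow L
  · have hRbdd : BddBelow R := by
      obtain ⟨c, hc⟩ := hbdd
      refine ⟨c, fun v hv => ?_⟩
      obtain ⟨w, hw, hwv⟩ := hwk v hv
      exact le_trans (hc hw) hwv
    apply le_antisymm
    · apply le_csInf hRne
      intro v hv
      obtain ⟨w, hw, hwv⟩ := hwk v hv
      exact le_trans (csInf_le hbdd hw) hwv
    · apply le_csInf hLne
      intro w hw
      apply le_of_forall_pos_le_add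
      intro ε hε
      obtain ⟨v, hv, hlt⟩ := hst w hw ε hε
      exact le_trans (csInf_le hRbdd hv) hlt.le
  · have hRbdd : ¬ BddBelow R := by
      rintro ⟨c, hc⟩
      apply hbdd
      refine ⟨c - 1, fun w hw => ?_⟩
      obtain ⟨v, hv, hlt⟩ := hst w hw 1 one_pos
      have := hc hv
      linarith
    rw [Real.sInf_of_not_bddBelow hbdd, Real.sInf_of_not_bddBelow hRbdd]

theorem stmt8 (I d K m : ℕ) (hI : 0 < I) (hd : 0 < d) (hK : 0 < K) (hm : 0 < m)
    (X : Set ((Fin I → ℝ) × (Fin d → ℝ))) (hXne : X.Nonempty)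
    (hXbin : ∀ z ∈ X, ∀ i, z.1 i = 0 ∨ z.1 i = 1)
    (g : (Fin I → ℝ) × (Fin d → ℝ) → ℝ)
    (Q : (Fin I → ℝ) → Fin K → ℝ)
    (lam alp : ℝ) (hlam0 : 0 ≤ lam) (hlam1 : lam ≤ 1) (halp0 : 0 < alp) (halp1 : alp < 1)
    (a : Fin K → Fin m → ℝ)
    (l u : (Fin I → ℝ) → Fin m → ℝ)
    (plo phi : (Fin I → ℝ) → Fin K → ℝ)
    (hne : ∀ x : Fin I → ℝ, (∃ y, (x, y) ∈ X) →
      ∃ p ∈ Type1Set K m a (l x) (u x) (plo x) (phi x), (CVaRSet K lam alp p).Nonempty) :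
    sInf {v : ℝ | ∃ z ∈ X,
        v = g z + sSup {r : ℝ | ∃ p ∈ Type1Set K m a (l z.1) (u z.1) (plo z.1) (phi z.1),
          ∃ q ∈ CVaRSet K lam alp p,
          r = (1 - lam) * (∑ k, p k * Q z.1 k) + ∑ k, q k * Q z.1 k}} =
    sInf {v : ℝ | ∃ z ∈ X, ∃ θ : ℝ, ∃ pv : Fin K → ℝ, ∃ α β : Fin m → ℝ,
        ∃ gl gu : Fin K → ℝ,
        (∀ k, 0 ≤ pv k) ∧ (∀ s, 0 ≤ α s) ∧ (∀ s, 0 ≤ β s) ∧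
        (∀ k, 0 ≤ gl k) ∧ (∀ k, 0 ≤ gu k) ∧
        (∀ k, Q z.1 k ≤ pv k + θ) ∧
        (∀ k, (1 - lam) * Q z.1 k ≤
          -(lam / (1 - alp)) * pv k + (∑ s, (-(α s) + β s) * a k s) - gl k + gu k) ∧
        v = g z + lam * θ - (∑ s, α s * l z.1 s) + (∑ s, β s * u z.1 s)
            - (∑ k, gl k * plo z.1 k) + (∑ k, gu k * phi z.1 k)} := by
  classical
  have key : ∀ z : (Fin I → ℝ) × (Fin d → ℝ), z ∈ X →
      (∀ θ pv al be gl gu, DualOK lam alp a (Q z.1) θ pv al be gl gu →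
        sSup {r : ℝ | ∃ p ∈ Type1Set K m a (l z.1) (u z.1) (plo z.1) (phi z.1),
          ∃ q ∈ CVaRSet K lam alp p,
          r = (1 - lam) * (∑ k, p k * Q z.1 k) + ∑ k, q k * Q z.1 k}
          ≤ dval lam (l z.1) (u z.1) (plo z.1) (phi z.1) θ al be gl gu) ∧
      (∀ ε : ℝ, 0 < ε → ∃ θ pv al be gl gu, DualOK lam alp a (Q z.1) θ pv al be gl gu ∧
        dval lam (l z.1) (u z.1) (plo z.1) (phi z.1) θ al be gl gu <
        sSup {r : ℝ | ∃ p ∈ Type1Set K m a (l z.1) (u z.1) (plo z.1) (phi z.1),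
          ∃ q ∈ CVaRSet K lam alp p,
          r = (1 - lam) * (∑ k, p k * Q z.1 k) + ∑ k, q k * Q z.1 k} + ε) := by
    intro z hz
    exact keyx lam alp a (Q z.1) (l z.1) (u z.1) (plo z.1) (phi z.1) hlam0 hlam1 halp1
      (hne z.1 ⟨z.2, by simpa using hz⟩)
  apply sInf_eq_of_approx_s8
  · obtain ⟨z, hz⟩ := hXne
    exact ⟨_, z, hz, rfl⟩
  · rintro v ⟨z, hz, θ, pv, al, be, gl, gu, h1, h2, h3, h4, h5, h6, h7, hv⟩
    refine ⟨g z + sSup {r : ℝ | ∃ p ∈ Type1Set K m a (l z.1) (u z.1) (plo z.1) (phi z.1),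
        ∃ q ∈ CVaRSet K lam alp p,
        r = (1 - lam) * (∑ k, p k * Q z.1 k) + ∑ k, q k * Q z.1 k}, ⟨z, hz, rfl⟩, ?_⟩
    have hle := (key z hz).1 θ pv al be gl gu ⟨h1, h2, h3, h4, h5, h6, h7⟩
    have hv' : v = g z + dval lam (l z.1) (u z.1) (plo z.1) (phi z.1) θ al be gl gu := by
      rw [hv]; simp only [dval]; ring
    linarith
  · rintro w ⟨z, hz, rfl⟩ ε hε
    obtain ⟨θ, pv, al, be, gl, gu, hOK, hlt⟩ := (key z hz).2 ε hε
    obtain ⟨h1, h2, h3, h4, h5, h6, h7⟩ := hOK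
    refine ⟨g z + dval lam (l z.1) (u z.1) (plo z.1) (phi z.1) θ al be gl gu,
      ⟨z, hz, θ, pv, al, be, gl, gu, h1, h2, h3, h4, h5, h6, h7, by simp only [dval]; ring⟩,
      by linarith⟩
end

section
/- Let J be a positive integer, let Ξ ⊆ ℝ^J be compact, let Q : Ξ → ℝ be continuous, let μ ∈ ℝ^J, let S ∈ ℝ^{J×J} be symmetric positive definite, and let γ, η ∈ ℝ. Let P be a Borel probability measure on Ξ, set τ = ∫_Ξ ξ dP(ξ) and M = ∫_Ξ (ξ − μ)(ξ − μ)ᵀ dP(ξ), and assume (τ − μ)ᵀ S⁻¹ (τ − μ) ≤ γ and that η S − M is positive semidefinite. Suppose s ∈ ℝ, z₁ ∈ ℝ^{J×J}, z₂ ∈ ℝ^J, z₃ ∈ ℝ and Y ∈ ℝ^{J×J} are such that the block matrix Z = [[z₁, z₂],[z₂ᵀ, z₃]] ∈ ℝ^{(J+1)×(J+1)} is positive semidefinite, Y is positive semidefinite, and s − 2 z₂ᵀ ξ + ((ξ − μ)(ξ − μ)ᵀ) • Y ≥ Q(ξ) for every ξ ∈ Ξ. Then ∫_Ξ Q dP ≤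 s + S • z₁ − 2 μᵀ z₂ + γ z₃ + η (S • Y). -/
open scoped BigOperators
open MeasureTheory Matrix

/-- The block matrix `Z = [[z₁, z₂], [z₂ᵀ, z₃]]`. -/
def blockMat {J : ℕ} (z₁ : Matrix (Fin J) (Fin J) ℝ) (z₂ : Fin J → ℝ) (z₃ : ℝ) :
    Matrix (Fin J ⊕ Unit) (Fin J ⊕ Unit) ℝ :=
  Matrix.fromBlocks z₁ (Matrix.of fun i _ => z₂ i) (Matrix.of fun _ j => z₂ j)
    (Matrix.of fun _ _ => z₃)

/-- The Frobenius inner product of two PSD matrices is nonnegative. -/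
lemma frob_nonneg {n : Type*} [Fintype n] [DecidableEq n] {A C : Matrix n n ℝ}
    (hA : A.PosSemidef) (hC : C.PosSemidef) : 0 ≤ frob A C := by
  obtain ⟨B, hB⟩ : ∃ B : Matrix n n ℝ, A = Bᴴ * B := by
    open scoped MatrixOrder in
    obtain ⟨a, rfl⟩ := CStarAlgebra.nonneg_iff_eq_star_mul_self.mp hA.nonneg
    exact ⟨a, rfl⟩
  have hA' : ∀ i j, A i j = ∑ k, B k i * B k j := by
    intro i j
    rw [hB]
    simp [Matrix.mul_apply, Matrix.conjTranspose_apply]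
  have key : frob A C = ∑ k, ∑ i, ∑ j, B k i * (C i j * B k j) := by
    have : frob A C = ∑ i, ∑ k, ∑ j, B k i * (C i j * B k j) := by
      refine Finset.sum_congr rfl fun i _ => ?_
      rw [show (∑ j, A i j * C i j) = ∑ j, ∑ k, B k i * (C i j * B k j) from
        Finset.sum_congr rfl fun j _ => by
          rw [hA' i j, Finset.sum_mul]
          exact Finset.sum_congr rfl fun k _ => by ring]
      exact Finset.sum_comm
    rw [this]
    exact Finset.sum_comm
  rw [key]
  refine Finset.sum_nonneg fun k _ => ?_
  have := hC.dotProduct_mulVec_nonneg (fun i => B k i)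
  simpa [dotProduct, Matrix.mulVec, dotProduct, Finset.mul_sum] using this

/-- Weak duality direction of the continuous-support Type-3 reformulation:
any dual feasible `(s, Z, Y)` with `Z, Y` positive semidefinite bounds `∫ Q dP`
from above for any probability measure `P` on the compact support `Ξ` whose mean
`τ` lies in the ellipsoid `(τ−μ)ᵀ S⁻¹ (τ−μ) ≤ γ` and whose centered second-moment
matrix `M` satisfies `M ⪯ η S`. -/
theorem stmt14 (J : ℕ) (hJ : 0 < J)
    (Ξ : Set (Fin J → ℝ)) (hΞ : IsCompact Ξ)
    (Q : (Fin J → ℝ) → ℝ) (hQ : ContinuousOn Q Ξ)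
    (μ : Fin J → ℝ) (S : Matrix (Fin J) (Fin J) ℝ) (hS : S.PosDef) (γ η : ℝ)
    (P : Measure (Fin J → ℝ)) [IsProbabilityMeasure P] (hsupp : P Ξᶜ = 0)
    (τ : Fin J → ℝ) (hτ : ∀ j, τ j = ∫ ξ in Ξ, ξ j ∂P)
    (M : Matrix (Fin J) (Fin J) ℝ)
    (hM : ∀ i j, M i j = ∫ ξ in Ξ, (ξ i - μ i) * (ξ j - μ j) ∂P)
    (hellip : (fun j => τ j - μ j) ⬝ᵥ (S⁻¹ *ᵥ fun j => τ j - μ j) ≤ γ)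
    (hpsd : (η • S - M).PosSemidef)
    (s : ℝ) (z₁ : Matrix (Fin J) (Fin J) ℝ) (z₂ : Fin J → ℝ) (z₃ : ℝ)
    (Y : Matrix (Fin J) (Fin J) ℝ)
    (hZ : (blockMat z₁ z₂ z₃).PosSemidef) (hY : Y.PosSemidef)
    (hdual : ∀ ξ ∈ Ξ, Q ξ ≤ s - 2 * (∑ j, z₂ j * ξ j) +
      frob (Matrix.vecMulVec (fun j => ξ j - μ j) (fun j => ξ j - μ j)) Y) :
    (∫ ξ in Ξ, Q ξ ∂P) ≤
      s + frob S z₁ - 2 * (∑ j, μ j * z₂ j) + γ * z₃ + η * frob S Y := by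
  classical
  set d : Fin J → ℝ := fun j => τ j - μ j with hd
  -- measurability of Ξ and P Ξ = 1
  have hΞm : MeasurableSet Ξ := hΞ.measurableSet
  have hPΞ : P Ξ = 1 := by
    have := measure_add_measure_compl (μ := P) hΞm
    rw [hsupp, add_zero] at this
    simpa using this
  -- the dominating function
  set g : (Fin J → ℝ) → ℝ := fun ξ => s - 2 * (∑ j, z₂ j * ξ j) +
      frob (Matrix.vecMulVec (fun j => ξ j - μ j) (fun j => ξ j - μ j)) Y with hg
  have hgcont : Continuous g := by
    simp only [hg, frob, Matrix.vecMulVec_apply]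
    fun_prop
  -- integrability
  have hQint : IntegrableOn Q Ξ P := hQ.integrableOn_compact hΞ
  have hgint : IntegrableOn g Ξ P := hgcont.continuousOn.integrableOn_compact hΞ
  have hcoordint : ∀ j, IntegrableOn (fun ξ : Fin J → ℝ => ξ j) Ξ P := fun j =>
    (continuous_apply j).continuousOn.integrableOn_compact hΞ
  have hquadint : ∀ i j, IntegrableOn
      (fun ξ : Fin J → ℝ => (ξ i - μ i) * (ξ j - μ j) * Y i j) Ξ P := fun i j => by
    apply ContinuousOn.integrableOn_compact hΞ
    fun_prop
  -- step 1: ∫ Q ≤ ∫ g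
  have step1 : (∫ ξ in Ξ, Q ξ ∂P) ≤ ∫ ξ in Ξ, g ξ ∂P :=
    setIntegral_mono_on hQint hgint hΞm hdual
  -- step 2: compute ∫ g
  have hlin : (∫ ξ in Ξ, (∑ j, z₂ j * ξ j) ∂P) = ∑ j, z₂ j * τ j := by
    rw [integral_finset_sum _ (fun j _ => (hcoordint j).const_mul (z₂ j))]
    refine Finset.sum_congr rfl fun j _ => ?_
    rw [integral_const_mul, hτ j]
  have hquad : (∫ ξ in Ξ,
      frob (Matrix.vecMulVec (fun j => ξ j - μ j) (fun j => ξ j - μ j)) Y ∂P)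
      = frob M Y := by
    simp only [frob, Matrix.vecMulVec_apply]
    rw [integral_finset_sum _ (fun i _ => integrable_finset_sum _ (fun j _ => hquadint i j))]
    refine Finset.sum_congr rfl fun i _ => ?_
    rw [integral_finset_sum _ (fun j _ => hquadint i j)]
    refine Finset.sum_congr rfl fun j _ => ?_
    rw [integral_mul_const, hM i j]
  have step2 : (∫ ξ in Ξ, g ξ ∂P) = s - 2 * (∑ j, z₂ j * τ j) + frob M Y := by
    have h1 : IntegrableOn (fun ξ : Fin J → ℝ => s - 2 * (∑ j, z₂ j * ξ j)) Ξ P := by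
      apply ContinuousOn.integrableOn_compact hΞ
      fun_prop
    have h2 : IntegrableOn (fun ξ : Fin J → ℝ =>
        frob (Matrix.vecMulVec (fun j => ξ j - μ j) (fun j => ξ j - μ j)) Y) Ξ P := by
      apply ContinuousOn.integrableOn_compact hΞ
      simp only [frob, Matrix.vecMulVec_apply]
      fun_prop
    have h3 : IntegrableOn (fun ξ : Fin J → ℝ => 2 * (∑ j, z₂ j * ξ j)) Ξ P := by
      apply ContinuousOn.integrableOn_compact hΞ
      fun_prop
    rw [hg]
    rw [integral_add h1 h2, integral_sub (integrableOn_const (C := s) (s := Ξ) (μ := P) (by simp [hPΞ])) h3,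
      integral_const, integral_const_mul, hlin, hquad]
    simp [hPΞ, Measure.real]
  -- step 3: frob M Y ≤ η * frob S Y
  have hfrob_sub : frob (η • S - M) Y = η * frob S Y - frob M Y := by
    simp only [frob, Matrix.sub_apply, Matrix.smul_apply, smul_eq_mul, sub_mul,
      Finset.sum_sub_distrib, Finset.mul_sum]
    ring_nf
  have step3 : frob M Y ≤ η * frob S Y := by
    have := frob_nonneg hpsd hY
    rw [hfrob_sub] at this
    linarith
  -- step 4: the block inequality
  have step4 : 0 ≤ frob S z₁ + 2 * (∑ j, d j * z₂ j) + γ * z₃ := by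
    haveI := hS.isUnit.invertible
    set B : Matrix (Fin J) Unit ℝ := Matrix.of fun i _ => d i with hB
    set D : Matrix Unit Unit ℝ := Matrix.of fun _ _ => γ with hD
    have hschur : (D - Bᴴ * S⁻¹ * B).PosSemidef := by
      refine Matrix.PosSemidef.of_dotProduct_mulVec_nonneg ?_ ?_
      · ext i j
        simp [Matrix.conjTranspose_apply]
      · intro x
        have hentry : (D - Bᴴ * S⁻¹ * B) () () = γ - d ⬝ᵥ (S⁻¹ *ᵥ d) := by
          have h1 : (Bᴴ * S⁻¹ * B) () () = ∑ j, ∑ i, d i * (S⁻¹ i j * d j) := by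
            simp only [Matrix.mul_apply, Matrix.conjTranspose_apply, hB, Matrix.of_apply,
              star_trivial, Finset.sum_mul]
            exact Finset.sum_congr rfl fun j _ => Finset.sum_congr rfl fun i _ => by ring
          have h2 : d ⬝ᵥ (S⁻¹ *ᵥ d) = ∑ i, ∑ j, d i * (S⁻¹ i j * d j) := by
            simp only [dotProduct, Matrix.mulVec, Finset.mul_sum]
          rw [Matrix.sub_apply, h1, h2, Finset.sum_comm, hD]
          rfl
        have hγ : 0 ≤ γ - d ⬝ᵥ (S⁻¹ *ᵥ d) := by linarith [hellip]
        have hx : (star x ⬝ᵥ ((D - Bᴴ * S⁻¹ * B) *ᵥ x)) =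
            ((D - Bᴴ * S⁻¹ * B) () ()) * (x () * x ()) := by
          simp only [dotProduct, Matrix.mulVec, star_trivial, Finset.univ_unique,
            Finset.sum_singleton]
          ring
        rw [hx, hentry]
        exact mul_nonneg hγ (mul_self_nonneg _)
    have hBlockPSD : (Matrix.fromBlocks S B Bᴴ D).PosSemidef :=
      (Matrix.PosDef.fromBlocks₁₁ B D hS).mpr hschur
    have hBH : Bᴴ = Matrix.of fun _ j => d j := by
      ext i j
      simp [hB, Matrix.conjTranspose_apply]
    have hnn : 0 ≤ frob (Matrix.fromBlocks S B Bᴴ D) (blockMat z₁ z₂ z₃) :=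
      frob_nonneg hBlockPSD hZ
    have hexpand : frob (Matrix.fromBlocks S B Bᴴ D) (blockMat z₁ z₂ z₃)
        = frob S z₁ + 2 * (∑ j, d j * z₂ j) + γ * z₃ := by
      simp only [frob, blockMat, Fintype.sum_sum_type, Matrix.fromBlocks_apply₁₁,
        Matrix.fromBlocks_apply₁₂, Matrix.fromBlocks_apply₂₁, Matrix.fromBlocks_apply₂₂,
        hBH, hB, hD, Matrix.of_apply, Finset.univ_unique, Finset.sum_singleton, hd,
        Finset.sum_add_distrib, Finset.sum_sub_distrib, sub_mul, Matrix.conjTranspose_apply,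
        star_trivial]
      ring
    rw [hexpand] at hnn
    exact hnn
  -- combine
  have hsum : (∑ j, d j * z₂ j) = (∑ j, z₂ j * τ j) - (∑ j, μ j * z₂ j) := by
    rw [← Finset.sum_sub_distrib]
    exact Finset.sum_congr rfl fun j _ => by simp [hd]; ring
  rw [hsum] at step4
  linarith [step1, step2.le, step2.ge]
end
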